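/- arXiv:math/0503638 — 7 statements merged into one kernel-verified Lean document; each statement's English description precedes it below -/
import Mathlib

section
/- Suppose G̃ : ℝ × (0,∞) × ℝ → ℝ satisfies ‖G̃(·,t;·)‖: sup_x ∫_ℝ |G̃(x,t;y)| dy ≤ C₁, sup_{x,y} |∂_y G̃(x,t;y)| ≤ C₂ t^{-1}, and sup_x ∫_ℝ |∂_y G̃(x,t;y)| dy ≤ C₃ t^{-1/2}. Suppose v₀ : ℝ → ℝ satisfies |v₀(y)| ≤ E₀(1+|y|)^{-3/2} and ∫_ℝ v₀ = 0. Then for all x ∈ ℝ and t > 0, |∫_ℝ G̃(x,t;y) v₀(y) dy| ≤ C E₀ (1+t)^{-3/4}, where C depends only on C₁, C₂, C₃. -/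
/-!
Because `∫ v₀ = 0`, the kernel `G̃(x,t;y)` may be replaced by `G̃(x,t;y) - G̃(x,t;0)`. By the
mean value theorem this difference is at most `C₂ |y| / t`, and by the fundamental theorem of
calculus at most `C₃ / √t`. Use the first bound for `|y| ≤ √t`, where
`|y| (1 + |y|)^(-3/2) ≤ |y|^(-1/2)`, and the second one for `|y| > √t`, where
`(1 + |y|)^(-3/2) ≤ |y|^(-3/2)`. Each piece is then `O(E₀ t^(-3/4))`. For `t ≤ 1` the crude
bound `C₁ E₀` suffices.
-/

open MeasureTheory Set Real

theorem integrableOn_comp_abs_preimage {f : ℝ → ℝ} {s : Set ℝ} (hs : MeasurableSet s)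
    (hf : IntegrableOn f (Ioi 0 ∩ s)) : IntegrableOn (fun x => f |x|) (abs ⁻¹' s) := by
  have hind : IntegrableOn (s.indicator f) (Ioi 0) := by
    rwa [IntegrableOn, integrable_indicator_iff hs, IntegrableOn,
      Measure.restrict_restrict hs, inter_comm]
  have hIoi : IntegrableOn (fun x => s.indicator f |x|) (Ioi 0) :=
    hind.congr_fun (fun x hx => by rw [abs_of_pos hx]) measurableSet_Ioi
  have hIic : IntegrableOn (fun x => s.indicator f |x|) (Iic 0) := by
    rw [← Measure.map_neg_eq_self (volume : Measure ℝ)]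
    let m : MeasurableEmbedding fun x : ℝ => -x := (Homeomorph.neg ℝ).measurableEmbedding
    rw [m.integrableOn_map_iff]
    simp_rw [Function.comp_def, abs_neg, neg_preimage, neg_Iic, neg_zero]
    exact Iff.mpr integrableOn_Ici_iff_integrableOn_Ioi hIoi
  have hline := hIic.union hIoi
  rw [Iic_union_Ioi, integrableOn_univ] at hline
  rw [← integrable_indicator_iff (measurable_abs hs)]
  exact hline.congr (.of_forall fun x => (indicator_comp_right (fun x : ℝ => |x|)).symm)

theorem setIntegral_comp_abs_preimage {f : ℝ → ℝ} {s : Set ℝ} (hs : MeasurableSet s) :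
    ∫ x in abs ⁻¹' s, f |x| = 2 * ∫ x in Ioi 0 ∩ s, f x := by
  rw [← integral_indicator (measurable_abs hs), ← setIntegral_indicator hs, ← integral_comp_abs]
  exact integral_congr_ae (.of_forall fun x => indicator_comp_right (fun x : ℝ => |x|))

theorem Icc_neg_self_eq_abs_preimage_Iic (R : ℝ) : Icc (-R) R = abs ⁻¹' Iic R :=
  ext fun _ => abs_le.symm

theorem compl_Icc_neg_self_eq_abs_preimage_Ioi (R : ℝ) : (Icc (-R) R)ᶜ = abs ⁻¹' Ioi R := by
  rw [Icc_neg_self_eq_abs_preimage_Iic, ← preimage_compl, compl_Iic]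

theorem integrableOn_Icc_abs_rpow {r : ℝ} (hr : -1 < r) (R : ℝ) :
    IntegrableOn (fun x : ℝ => |x| ^ r) (Icc (-R) R) := by
  rw [Icc_neg_self_eq_abs_preimage_Iic]
  refine integrableOn_comp_abs_preimage (f := fun x => x ^ r) measurableSet_Iic ?_
  rw [Ioi_inter_Iic]
  exact (intervalIntegral.intervalIntegrable_rpow' hr).1

theorem integral_Icc_abs_rpow {r R : ℝ} (hr : -1 < r) (hR : 0 ≤ R) :
    ∫ x in Icc (-R) R, |x| ^ r = 2 * R ^ (r + 1) / (r + 1) := by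
  rw [Icc_neg_self_eq_abs_preimage_Iic,
    setIntegral_comp_abs_preimage (f := fun x => x ^ r) measurableSet_Iic, Ioi_inter_Iic,
    ← intervalIntegral.integral_of_le hR, integral_rpow (.inl hr), zero_rpow (by linarith)]
  ring

theorem integrableOn_compl_Icc_abs_rpow {r R : ℝ} (hr : r < -1) (hR : 0 < R) :
    IntegrableOn (fun x : ℝ => |x| ^ r) (Icc (-R) R)ᶜ := by
  rw [compl_Icc_neg_self_eq_abs_preimage_Ioi]
  refine integrableOn_comp_abs_preimage (f := fun x => x ^ r) measurableSet_Ioi ?_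
  rw [Ioi_inter_Ioi, max_eq_right hR.le]
  exact integrableOn_Ioi_rpow_of_lt hr hR

theorem integral_compl_Icc_abs_rpow {r R : ℝ} (hr : r < -1) (hR : 0 < R) :
    ∫ x in (Icc (-R) R)ᶜ, |x| ^ r = -2 * R ^ (r + 1) / (r + 1) := by
  rw [compl_Icc_neg_self_eq_abs_preimage_Ioi,
    setIntegral_comp_abs_preimage (f := fun x => x ^ r) measurableSet_Ioi, Ioi_inter_Ioi,
    max_eq_right hR.le, integral_Ioi_rpow_of_lt hr hR]
  ring

theorem mul_one_add_rpow_neg_le {r a : ℝ} (hr : 0 ≤ r) (ha : 0 ≤ a) :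
    r * (1 + r) ^ (-a) ≤ r ^ (1 - a) := by
  rcases hr.eq_or_lt with rfl | hr
  · simpa using rpow_nonneg le_rfl (1 - a)
  calc r * (1 + r) ^ (-a) ≤ r * r ^ (-a) :=
        mul_le_mul_of_nonneg_left (rpow_le_rpow_of_nonpos hr (by linarith) (by linarith)) hr.le
    _ = r ^ (1 - a) := by rw [sub_eq_add_neg, rpow_add hr, rpow_one]

theorem abs_sub_le_integral_abs_deriv {g g' : ℝ → ℝ} (hg : ∀ y, HasDerivAt g (g' y) y)
    (hg' : Integrable g') (a b : ℝ) : |g b - g a| ≤ ∫ y, |g' y| := by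
  rw [← intervalIntegral.integral_eq_sub_of_hasDerivAt (fun y _ => hg y) hg'.intervalIntegrable]
  calc |∫ y in a..b, g' y| ≤ ∫ y in uIoc a b, |g' y| := by
        simpa only [Real.norm_eq_abs] using
          intervalIntegral.norm_integral_le_integral_norm_uIoc (f := g') (μ := volume)
    _ ≤ ∫ y, |g' y| := setIntegral_le_integral hg'.abs (.of_forall fun _ => abs_nonneg _)

theorem abs_integral_mul_le_of_abs_le {g v : ℝ → ℝ} {E : ℝ} (hg : Integrable g)
    (hv : AEStronglyMeasurable v) (hvE : ∀ y, |v y| ≤ E) :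
    |∫ y, g y * v y| ≤ E * ∫ y, |g y| := by
  have hgv : Integrable fun y => g y * v y := hg.mul_bdd hv (.of_forall hvE)
  calc |∫ y, g y * v y| ≤ ∫ y, |g y * v y| := abs_integral_le_integral_abs
    _ ≤ ∫ y, E * |g y| := integral_mono hgv.abs (hg.abs.const_mul E) fun y => by
        rw [abs_mul, mul_comm E]
        exact mul_le_mul_of_nonneg_left (hvE y) (abs_nonneg _)
    _ = E * ∫ y, |g y| := integral_const_mul _ _

theorem setIntegral_Icc_abs_mul_le {u v : ℝ → ℝ} {L E R : ℝ} (hR : 0 ≤ R) (hE : 0 ≤ E)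
    (huv : Integrable fun y => u y * v y) (hu : ∀ y, |u y| ≤ L * |y|)
    (hv : ∀ y, |v y| ≤ E * (1 + |y|) ^ (-(3 / 2 : ℝ))) :
    ∫ y in Icc (-R) R, |u y * v y| ≤ 4 * E * (L * R ^ (1 / 2 : ℝ)) := by
  have hL : 0 ≤ L := by simpa using (abs_nonneg _).trans (hu 1)
  have hpointwise (y : ℝ) : |u y * v y| ≤ L * E * |y| ^ (-(1 / 2) : ℝ) := by
    have hweight := mul_one_add_rpow_neg_le (abs_nonneg y) (by norm_num : (0 : ℝ) ≤ 3 / 2)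
    norm_num at hweight
    calc |u y * v y| ≤ L * |y| * (E * (1 + |y|) ^ (-(3 / 2 : ℝ))) := by
          rw [abs_mul]; exact mul_le_mul (hu y) (hv y) (abs_nonneg _) (by positivity)
      _ = L * E * (|y| * (1 + |y|) ^ (-(3 / 2 : ℝ))) := by ring
      _ ≤ L * E * |y| ^ (-(1 / 2) : ℝ) := by
          norm_num
          exact mul_le_mul_of_nonneg_left hweight (by positivity)
  calc ∫ y in Icc (-R) R, |u y * v y| ≤ ∫ y in Icc (-R) R, L * E * |y| ^ (-(1 / 2) : ℝ) :=
        setIntegral_mono_on huv.abs.integrableOn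
          ((integrableOn_Icc_abs_rpow (by norm_num) R).const_mul _) measurableSet_Icc
          fun y _ => hpointwise y
    _ = 4 * E * (L * R ^ (1 / 2 : ℝ)) := by
        rw [integral_const_mul, integral_Icc_abs_rpow (by norm_num) hR]
        norm_num
        ring

theorem setIntegral_compl_Icc_abs_mul_le {u v : ℝ → ℝ} {M E R : ℝ} (hR : 0 < R) (hE : 0 ≤ E)
    (huv : Integrable fun y => u y * v y) (hu : ∀ y, |u y| ≤ M)
    (hv : ∀ y, |v y| ≤ E * (1 + |y|) ^ (-(3 / 2 : ℝ))) :
    ∫ y in (Icc (-R) R)ᶜ, |u y * v y| ≤ 4 * E * (M * R ^ (-(1 / 2) : ℝ)) := by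
  have hM : 0 ≤ M := (abs_nonneg _).trans (hu 0)
  have hpointwise (y : ℝ) (hy : 0 < |y|) : |u y * v y| ≤ M * E * |y| ^ (-(3 / 2) : ℝ) :=
    calc |u y * v y| ≤ M * (E * (1 + |y|) ^ (-(3 / 2 : ℝ))) := by
          rw [abs_mul]; exact mul_le_mul (hu y) (hv y) (abs_nonneg _) hM
      _ ≤ M * (E * |y| ^ (-(3 / 2 : ℝ))) :=
          mul_le_mul_of_nonneg_left (mul_le_mul_of_nonneg_left
            (rpow_le_rpow_of_nonpos hy (by linarith) (by norm_num)) hE) hM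
      _ = M * E * |y| ^ (-(3 / 2) : ℝ) := by ring
  calc ∫ y in (Icc (-R) R)ᶜ, |u y * v y| ≤ ∫ y in (Icc (-R) R)ᶜ, M * E * |y| ^ (-(3 / 2) : ℝ) :=
        setIntegral_mono_on huv.abs.integrableOn
          ((integrableOn_compl_Icc_abs_rpow (by norm_num) hR).const_mul _)
          measurableSet_Icc.compl fun y hy => by
            rw [compl_Icc_neg_self_eq_abs_preimage_Ioi] at hy
            exact hpointwise y (hR.trans hy)
    _ = 4 * E * (M * R ^ (-(1 / 2) : ℝ)) := by
        rw [integral_const_mul, integral_compl_Icc_abs_rpow (by norm_num) hR]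
        norm_num
        ring

theorem abs_integral_mul_le_of_integral_eq_zero {g v : ℝ → ℝ} {L M E R : ℝ} (hR : 0 < R)
    (hE : 0 ≤ E) (hgv : Integrable fun y => g y * v y) (hv : Integrable v)
    (hv₀ : ∫ y, v y = 0) (hL : ∀ y, |g y - g 0| ≤ L * |y|) (hM : ∀ y, |g y - g 0| ≤ M)
    (hvE : ∀ y, |v y| ≤ E * (1 + |y|) ^ (-(3 / 2 : ℝ))) :
    |∫ y, g y * v y| ≤ 4 * E * (L * R ^ (1 / 2 : ℝ) + M * R ^ (-(1 / 2) : ℝ)) := by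
  have hh : Integrable fun y => (g y - g 0) * v y := by
    simp only [sub_mul]
    exact hgv.sub (hv.const_mul (g 0))
  have hsub : ∫ y, g y * v y = ∫ y, (g y - g 0) * v y := by
    simp only [sub_mul]
    rw [integral_sub hgv (hv.const_mul _), integral_const_mul, hv₀, mul_zero, sub_zero]
  calc |∫ y, g y * v y| = |∫ y, (g y - g 0) * v y| := by rw [hsub]
    _ ≤ ∫ y, |(g y - g 0) * v y| := abs_integral_le_integral_abs
    _ = (∫ y in Icc (-R) R, |(g y - g 0) * v y|) + ∫ y in (Icc (-R) R)ᶜ, |(g y - g 0) * v y| :=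
        (integral_add_compl measurableSet_Icc hh.abs).symm
    _ ≤ _ := by
        rw [mul_add]
        exact add_le_add (setIntegral_Icc_abs_mul_le hR.le hE hh hL hvE)
          (setIntegral_compl_Icc_abs_mul_le hR hE hh hM hvE)

theorem abs_integral_mul_le_of_deriv_bounds {g g' v : ℝ → ℝ} {C₂ C₃ E t : ℝ} (ht : 0 < t)
    (hE : 0 ≤ E) (hg : ∀ y, HasDerivAt g (g' y) y) (hg' : Integrable g')
    (hg'_le : ∀ y, |g' y| ≤ C₂ / t) (hg'_int : ∫ y, |g' y| ≤ C₃ / √t)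
    (hgv : Integrable fun y => g y * v y) (hv : Integrable v) (hv₀ : ∫ y, v y = 0)
    (hvE : ∀ y, |v y| ≤ E * (1 + |y|) ^ (-(3 / 2 : ℝ))) :
    |∫ y, g y * v y| ≤ 4 * E * (C₂ + C₃) * t ^ (-(3 / 4 : ℝ)) := by
  have hL (y : ℝ) : |g y - g 0| ≤ C₂ / t * |y| := by
    simpa [Real.norm_eq_abs] using convex_univ.norm_image_sub_le_of_norm_hasDerivWithin_le
      (fun y _ => (hg y).hasDerivWithinAt) (fun y _ => hg'_le y) (mem_univ 0) (mem_univ y)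
  have hM (y : ℝ) : |g y - g 0| ≤ C₃ / √t :=
    (abs_sub_le_integral_abs_deriv hg hg' 0 y).trans hg'_int
  have hnear : C₂ / t * √t ^ (1 / 2 : ℝ) = C₂ * t ^ (-(3 / 4 : ℝ)) := by
    rw [sqrt_eq_rpow, ← rpow_mul ht.le, div_mul_eq_mul_div, mul_div_assoc, ← rpow_sub_one ht.ne']
    norm_num
  have hfar : C₃ / √t * √t ^ (-(1 / 2) : ℝ) = C₃ * t ^ (-(3 / 4 : ℝ)) := by
    rw [sqrt_eq_rpow, ← rpow_mul ht.le, div_mul_eq_mul_div, mul_div_assoc, ← rpow_sub ht]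
    norm_num
  calc |∫ y, g y * v y|
      ≤ 4 * E * (C₂ / t * √t ^ (1 / 2 : ℝ) + C₃ / √t * √t ^ (-(1 / 2) : ℝ)) :=
        abs_integral_mul_le_of_integral_eq_zero (sqrt_pos.2 ht) hE hgv hv hv₀ hL hM hvE
    _ = 4 * E * (C₂ + C₃) * t ^ (-(3 / 4 : ℝ)) := by rw [hnear, hfar]; ring

theorem one_le_two_mul_one_add_rpow_neg {t a : ℝ} (ht₀ : 0 ≤ t) (ht₁ : t ≤ 1) (ha₀ : 0 ≤ a)
    (ha₁ : a ≤ 1) : 1 ≤ 2 * (1 + t) ^ (-a) :=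
  calc (1 : ℝ) = 2 * 2 ^ (-1 : ℝ) := by norm_num [rpow_neg_one]
    _ ≤ 2 * 2 ^ (-a) := by gcongr; norm_num
    _ ≤ 2 * (1 + t) ^ (-a) := by
        gcongr 2 * ?_
        exact rpow_le_rpow_of_nonpos (by linarith) (by linarith) (by linarith)

theorem rpow_neg_le_two_mul_one_add_rpow_neg {t a : ℝ} (ht : 1 ≤ t) (ha₀ : 0 ≤ a) (ha₁ : a ≤ 1) :
    t ^ (-a) ≤ 2 * (1 + t) ^ (-a) :=
  calc t ^ (-a) = 2 * (2 ^ (-1 : ℝ) * t ^ (-a)) := by rw [rpow_neg_one]; ring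
    _ ≤ 2 * (2 ^ (-a) * t ^ (-a)) := by gcongr; norm_num
    _ = 2 * (2 * t) ^ (-a) := by rw [mul_rpow (by norm_num) (by linarith)]
    _ ≤ 2 * (1 + t) ^ (-a) := by
        gcongr 2 * ?_
        exact rpow_le_rpow_of_nonpos (by linarith) (by linarith) (by linarith)

theorem stmt4 (C₁ C₂ C₃ : ℝ) (hC₁ : 0 < C₁) (hC₂ : 0 < C₂) (hC₃ : 0 < C₃) :
    ∃ C : ℝ, 0 < C ∧ ∀ (G G' : ℝ → ℝ → ℝ → ℝ) (v₀ : ℝ → ℝ) (E₀ : ℝ), 0 < E₀ →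
      (∀ x t y, 0 < t → HasDerivAt (fun y => G x t y) (G' x t y) y) →
      (∀ x t, 0 < t → MeasureTheory.Integrable (fun y => G x t y)) →
      (∀ x t, 0 < t → MeasureTheory.Integrable (fun y => G' x t y)) →
      (∀ x t, 0 < t → (∫ y : ℝ, |G x t y|) ≤ C₁) →
      (∀ x t y, 0 < t → |G' x t y| ≤ C₂ / t) →
      (∀ x t, 0 < t → (∫ y : ℝ, |G' x t y|) ≤ C₃ / Real.sqrt t) →
      MeasureTheory.Integrable v₀ →
      (∀ y, |v₀ y| ≤ E₀ * (1 + |y|) ^ (-(3 : ℝ) / 2)) →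
      (∫ y : ℝ, v₀ y) = 0 →
      ∀ x t, 0 < t → |∫ y : ℝ, G x t y * v₀ y| ≤ C * E₀ * (1 + t) ^ (-(3 : ℝ) / 4) := by
  refine ⟨8 * (C₁ + C₂ + C₃), by positivity, ?_⟩
  intro G G' v₀ E₀ hE₀ hG hGint hG'int hGbd hG'bd hG'intbd hv₀ hv₀bd hv₀sum x t ht
  rw [neg_div] at hv₀bd ⊢
  have hv₀E : ∀ y, |v₀ y| ≤ E₀ := fun y => (hv₀bd y).trans <| mul_le_of_le_one_right hE₀.le <|
    rpow_le_one_of_one_le_of_nonpos (le_add_of_nonneg_right (abs_nonneg y)) (by norm_num)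
  have hw : 0 ≤ (1 + t) ^ (-(3 / 4 : ℝ)) := by positivity
  have hgv : Integrable fun y => G x t y * v₀ y :=
    (hGint x t ht).mul_bdd hv₀.aestronglyMeasurable (.of_forall hv₀E)
  rcases le_total t 1 with ht₁ | ht₁
  · calc |∫ y, G x t y * v₀ y| ≤ E₀ * ∫ y, |G x t y| :=
          abs_integral_mul_le_of_abs_le (hGint x t ht) hv₀.aestronglyMeasurable hv₀E
      _ ≤ E₀ * C₁ * (2 * (1 + t) ^ (-(3 / 4 : ℝ))) := by
          rw [← mul_one (E₀ * ∫ y, |G x t y|)]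
          gcongr
          · exact hGbd x t ht
          · exact one_le_two_mul_one_add_rpow_neg ht.le ht₁ (by norm_num) (by norm_num)
      _ ≤ 8 * (C₁ + C₂ + C₃) * E₀ * (1 + t) ^ (-(3 / 4 : ℝ)) := by nlinarith [mul_nonneg hE₀.le hw]
  · calc |∫ y, G x t y * v₀ y| ≤ 4 * E₀ * (C₂ + C₃) * t ^ (-(3 / 4 : ℝ)) :=
          abs_integral_mul_le_of_deriv_bounds ht hE₀.le (hG x t · ht) (hG'int x t ht)
            (hG'bd x t · ht) (hG'intbd x t ht) hgv hv₀ hv₀sum hv₀bd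
      _ ≤ 4 * E₀ * (C₂ + C₃) * (2 * (1 + t) ^ (-(3 / 4 : ℝ))) := by
          gcongr
          exact rpow_neg_le_two_mul_one_add_rpow_neg ht₁ (by norm_num) (by norm_num)
      _ ≤ 8 * (C₁ + C₂ + C₃) * E₀ * (1 + t) ^ (-(3 / 4 : ℝ)) := by nlinarith [mul_nonneg hE₀.le hw]
end

section
/- Let η > 0, M > 0, and a < 0. Then there exists C > 0 such that for all t ≥ 0 and x ≤ 0, ∫_0^t ∫_{-∞}^0 (t-s)^{-1/2} exp(-(y+a(t-s))²/(M(t-s)))·e^{-η|y|}·(1+s)^{-1} dy ds ≤ C(1+t)^{-1}. -/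
open Set MeasureTheory intervalIntegral

theorem stmt6 (η M a : ℝ) (hη : 0 < η) (hM : 0 < M) (ha : a < 0) :
    ∃ C : ℝ, 0 < C ∧ ∀ t : ℝ, 0 ≤ t → ∀ x : ℝ, x ≤ 0 →
      (∫ s in Set.Ioc (0 : ℝ) t, ∫ y in Set.Iic (0 : ℝ),
        (t - s) ^ (-(1 : ℝ) / 2) * Real.exp (-(y + a * (t - s)) ^ 2 / (M * (t - s))) *
          Real.exp (-η * |y|) * (1 + s)⁻¹) ≤ C * (1 + t)⁻¹ := by
  have ha2 : 0 < a ^ 2 := by nlinarith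
  set c : ℝ := a ^ 2 / M with hc_def
  have hc : 0 < c := div_pos ha2 hM
  set K : ℝ := max 1 (2 / c) with hK_def
  have hK1 : (1:ℝ) ≤ K := le_max_left _ _
  have hK2 : 2 / c ≤ K := le_max_right _ _
  have hKpos : 0 < K := lt_of_lt_of_le one_pos hK1
  -- the fixed profile in u = t - s
  set h : ℝ → ℝ := fun u => u ^ (-(1:ℝ)/2) * Real.exp (-(c/2) * u) with hh_def
  have hh_nonneg : ∀ u, 0 ≤ u → 0 ≤ h u := fun u hu =>
    mul_nonneg (Real.rpow_nonneg hu _) (Real.exp_nonneg _)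
  have hh_int : IntegrableOn h (Ioi 0) := by
    have := integrableOn_rpow_mul_exp_neg_mul_rpow
      (by norm_num : (-1:ℝ) < -(1:ℝ)/2) (zero_lt_one : (0:ℝ) < 1) (half_pos hc)
    refine this.congr_fun (fun x hx => ?_) measurableSet_Ioi
    dsimp only
    rw [Real.rpow_one]
  set C₀ : ℝ := ∫ u in Ioi (0:ℝ), h u with hC₀_def
  have hC₀_nonneg : 0 ≤ C₀ := by
    apply setIntegral_nonneg measurableSet_Ioi
    intro u hu; exact hh_nonneg u (le_of_lt hu)
  -- integrability of exp(-η|y|) on Iic 0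
  have hB_int : IntegrableOn (fun y : ℝ => Real.exp (-η * |y|)) (Iic 0) := by
    have h1 : IntegrableOn (fun x : ℝ => Real.exp (-η * |x|)) (Ioi 0) := by
      refine (exp_neg_integrableOn_Ioi 0 hη).congr_fun (fun x hx => ?_) measurableSet_Ioi
      rw [abs_of_pos hx]
    have h2 : IntegrableOn (fun x : ℝ => Real.exp (-η * |x|)) (Ici 0) :=
      h1.congr_set_ae (Ioi_ae_eq_Ici).symm |>.congr_set_ae (by rfl)
    have h_map_neg : (volume.restrict (Set.Ici (0:ℝ))).map Neg.neg
        = volume.restrict (Set.Iic 0) := by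
      conv => rhs; rw [← Measure.map_neg_eq_self (volume : Measure ℝ),
        measurableEmbedding_neg.restrict_map]
      simp
    rw [IntegrableOn, ← h_map_neg, measurableEmbedding_neg.integrable_map_iff]
    refine h2.congr_fun (fun x hx => ?_) measurableSet_Ici
    simp [Function.comp, abs_neg]
  set B : ℝ := ∫ y in Iic (0:ℝ), Real.exp (-η * |y|) with hB_def
  have hB_nonneg : 0 ≤ B := by
    apply setIntegral_nonneg measurableSet_Iic
    intro y _; exact Real.exp_nonneg _
  refine ⟨K * B * C₀ + 1, by positivity, ?_⟩
  intro t ht x hx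
  have h1t : (0:ℝ) < 1 + t := by linarith
  -- pointwise bound for the inner integrand
  have key : ∀ s ∈ Ioc (0:ℝ) t, ∀ y ≤ (0:ℝ),
      (t - s) ^ (-(1 : ℝ) / 2) * Real.exp (-(y + a * (t - s)) ^ 2 / (M * (t - s))) *
          Real.exp (-η * |y|) * (1 + s)⁻¹
        ≤ (K * (1 + t)⁻¹ * h (t - s)) * Real.exp (-η * |y|) := by
    intro s hs y hy
    obtain ⟨hs0, hst⟩ := hs
    rcases eq_or_lt_of_le hst with rfl | hlt
    · simp only [sub_self]
      rw [Real.zero_rpow (by norm_num : (-(1:ℝ)/2) ≠ 0)]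
      have : h 0 = 0 := by
        simp only [hh_def]
        rw [Real.zero_rpow (by norm_num : (-(1:ℝ)/2) ≠ 0), zero_mul]
      rw [this]
      simp only [zero_mul, mul_zero, zero_mul]
      exact le_rfl
    · set d : ℝ := t - s with hd_def
      have hd : 0 < d := by simp only [hd_def]; linarith
      have h1s : (0:ℝ) < 1 + s := by linarith
      -- exponential bound
      have hexp1 : Real.exp (-(y + a * d) ^ 2 / (M * d)) ≤ Real.exp (-(c * d)) := by
        apply Real.exp_le_exp.mpr
        have hMd : 0 < M * d := mul_pos hM hd
        have h1 : a ^ 2 * d ^ 2 ≤ (y + a * d) ^ 2 := by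
          nlinarith [mul_nonneg (mul_nonneg (neg_nonneg.mpr ha.le) (neg_nonneg.mpr hy)) hd.le]
        have h2 : -(y + a * d) ^ 2 / (M * d) ≤ -(a ^ 2 * d ^ 2) / (M * d) := by
          rw [div_le_div_iff₀ hMd hMd]
          exact mul_le_mul_of_nonneg_right (neg_le_neg h1) hMd.le
        refine h2.trans_eq ?_
        rw [hc_def]
        field_simp
      -- bound on (1+s)⁻¹
      have hinv : (1 + s)⁻¹ ≤ K * Real.exp ((c/2) * d) * (1 + t)⁻¹ := by
        have hexp : (c/2) * d + 1 ≤ Real.exp ((c/2) * d) := Real.add_one_le_exp _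
        have hKd : 1 + d ≤ K * Real.exp ((c/2) * d) := by
          have hKc : 1 ≤ K * (c / 2) := by
            rw [hK_def]
            calc (1:ℝ) = (2 / c) * (c / 2) := by field_simp
            _ ≤ max 1 (2/c) * (c/2) :=
              mul_le_mul_of_nonneg_right (le_max_right _ _) (by positivity)
          nlinarith [Real.exp_pos ((c/2) * d)]
        have hts : 1 + t ≤ (1 + s) * (1 + d) := by
          have : t = s + d := by simp [hd_def]
          nlinarith
        have h2 : (1 + t) * (1 + s)⁻¹ ≤ K * Real.exp ((c/2) * d) := by
          rw [← div_eq_mul_inv, div_le_iff₀ h1s]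
          calc 1 + t ≤ (1 + s) * (1 + d) := hts
          _ ≤ (1 + s) * (K * Real.exp ((c/2)*d)) :=
            mul_le_mul_of_nonneg_left hKd h1s.le
          _ = K * Real.exp ((c/2)*d) * (1 + s) := by ring
        calc (1 + s)⁻¹ = ((1 + t) * (1 + s)⁻¹) * (1 + t)⁻¹ := by
              field_simp
        _ ≤ (K * Real.exp ((c/2) * d)) * (1 + t)⁻¹ :=
              mul_le_mul_of_nonneg_right h2 (by positivity)
      have hrp : 0 ≤ d ^ (-(1:ℝ)/2) := Real.rpow_nonneg hd.le _
      calc d ^ (-(1 : ℝ) / 2) * Real.exp (-(y + a * d) ^ 2 / (M * d)) *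
            Real.exp (-η * |y|) * (1 + s)⁻¹
          ≤ d ^ (-(1 : ℝ) / 2) * Real.exp (-(c * d)) *
            Real.exp (-η * |y|) * (K * Real.exp ((c/2) * d) * (1 + t)⁻¹) := by
            apply mul_le_mul
            · exact mul_le_mul_of_nonneg_right
                (mul_le_mul_of_nonneg_left hexp1 hrp) (Real.exp_nonneg _)
            · exact hinv
            · positivity
            · positivity
        _ = (K * (1 + t)⁻¹ * h d) * Real.exp (-η * |y|) := by
            have hE : Real.exp (-(c/2) * d)
                = Real.exp (-(c * d)) * Real.exp (c / 2 * d) := by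
              rw [← Real.exp_add]; congr 1; ring
            simp only [hh_def]
            rw [hE]; ring
  -- nonnegativity of the inner integral
  have hF_nonneg : ∀ s ∈ Ioc (0:ℝ) t,
      0 ≤ ∫ y in Set.Iic (0 : ℝ),
        (t - s) ^ (-(1 : ℝ) / 2) * Real.exp (-(y + a * (t - s)) ^ 2 / (M * (t - s))) *
          Real.exp (-η * |y|) * (1 + s)⁻¹ := by
    intro s hs
    apply setIntegral_nonneg measurableSet_Iic
    intro y _
    have hts : 0 ≤ t - s := by linarith [hs.2]
    have h1s : (0:ℝ) < 1 + s := by linarith [hs.1]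
    have := Real.rpow_nonneg hts (-(1:ℝ)/2)
    positivity
  -- inner-integral bound
  have hFG : ∀ s ∈ Ioc (0:ℝ) t,
      (∫ y in Set.Iic (0 : ℝ),
        (t - s) ^ (-(1 : ℝ) / 2) * Real.exp (-(y + a * (t - s)) ^ 2 / (M * (t - s))) *
          Real.exp (-η * |y|) * (1 + s)⁻¹)
      ≤ (K * B * (1 + t)⁻¹) * h (t - s) := by
    intro s hs
    have hts : 0 ≤ t - s := by linarith [hs.2]
    have hcoeff : 0 ≤ K * (1 + t)⁻¹ * h (t - s) := by
      have := hh_nonneg _ hts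
      positivity
    calc (∫ y in Set.Iic (0 : ℝ),
          (t - s) ^ (-(1 : ℝ) / 2) * Real.exp (-(y + a * (t - s)) ^ 2 / (M * (t - s))) *
            Real.exp (-η * |y|) * (1 + s)⁻¹)
        ≤ ∫ y in Set.Iic (0 : ℝ), (K * (1 + t)⁻¹ * h (t - s)) * Real.exp (-η * |y|) := by
          apply integral_mono_of_nonneg
          · filter_upwards [ae_restrict_mem measurableSet_Iic] with y hy
            have h1s : (0:ℝ) < 1 + s := by linarith [hs.1]
            have := Real.rpow_nonneg hts (-(1:ℝ)/2)
            positivity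
          · exact hB_int.const_mul _
          · filter_upwards [ae_restrict_mem measurableSet_Iic] with y hy
            exact key s hs y hy
      _ = (K * (1 + t)⁻¹ * h (t - s)) * B := by
          rw [MeasureTheory.integral_const_mul]
      _ = (K * B * (1 + t)⁻¹) * h (t - s) := by ring
  -- integrability of s ↦ h (t - s) on Ioc 0 t
  have hh_int' : IntegrableOn h (Ioc 0 t) := hh_int.mono_set Ioc_subset_Ioi_self
  have hI1 : IntervalIntegrable h volume 0 t :=
    (intervalIntegrable_iff_integrableOn_Ioc_of_le ht).mpr hh_int'
  have hI2 : IntervalIntegrable (fun s => h (t - s)) volume 0 t := by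
    have := hI1.comp_sub_left t
    simpa using this.symm
  have hG_int : IntegrableOn (fun s => h (t - s)) (Ioc 0 t) :=
    (intervalIntegrable_iff_integrableOn_Ioc_of_le ht).mp hI2
  -- substitution for the outer integral
  have hsub : (∫ s in Ioc (0:ℝ) t, h (t - s)) = ∫ u in Ioc (0:ℝ) t, h u := by
    rw [← intervalIntegral.integral_of_le ht, ← intervalIntegral.integral_of_le ht]
    have := intervalIntegral.integral_comp_sub_left (a := (0:ℝ)) (b := t) h t
    simpa using this
  have houter : (∫ u in Ioc (0:ℝ) t, h u) ≤ C₀ := by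
    rw [hC₀_def]
    apply setIntegral_mono_set hh_int
    · filter_upwards [ae_restrict_mem measurableSet_Ioi] with u hu
      exact hh_nonneg u (le_of_lt hu)
    · exact HasSubset.Subset.eventuallyLE Ioc_subset_Ioi_self
  -- put everything together
  calc (∫ s in Set.Ioc (0 : ℝ) t, ∫ y in Set.Iic (0 : ℝ),
        (t - s) ^ (-(1 : ℝ) / 2) * Real.exp (-(y + a * (t - s)) ^ 2 / (M * (t - s))) *
          Real.exp (-η * |y|) * (1 + s)⁻¹)
      ≤ ∫ s in Set.Ioc (0:ℝ) t, (K * B * (1 + t)⁻¹) * h (t - s) := by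
        apply integral_mono_of_nonneg
        · filter_upwards [ae_restrict_mem measurableSet_Ioc] with s hs
          exact hF_nonneg s hs
        · exact hG_int.const_mul _
        · filter_upwards [ae_restrict_mem measurableSet_Ioc] with s hs
          exact hFG s hs
    _ = (K * B * (1 + t)⁻¹) * ∫ s in Set.Ioc (0:ℝ) t, h (t - s) := MeasureTheory.integral_const_mul _ _
    _ ≤ (K * B * (1 + t)⁻¹) * C₀ := by
        apply mul_le_mul_of_nonneg_left _ (by positivity)
        rw [hsub]; exact houter
    _ = (K * B * C₀) * (1 + t)⁻¹ := by ring
    _ ≤ (K * B * C₀ + 1) * (1 + t)⁻¹ := by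
        apply mul_le_mul_of_nonneg_right (by linarith) (by positivity)
end

section
/- Suppose v₀ satisfies ∫_ℝ v₀ = 0 and |v₀(y)| ≤ E₀(1+|y|)^{-3/2}, and let e(y,t) satisfy |∂_y e(y,t)| ≤ C₀ t^{-1/2} e^{-(y+at)²/(Mt)} for some a > 0, M > 0, with e(±∞, t) constants and e(-∞,t) = 0. Then |∫_ℝ e(y,t) v₀(y) dy| ≤ C E₀ (1+t)^{-1/2} for all t > 0. -/
open MeasureTheory Real Filter Set Topology

set_option maxHeartbeats 1000000

private lemma gauss_integrable (c b : ℝ) (hb : 0 < b) :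
    Integrable fun s : ℝ => Real.exp (-(s + c)^2 / b) := by
  have h1 : Integrable fun s : ℝ => Real.exp (-b⁻¹ * s ^ 2) :=
    integrable_exp_neg_mul_sq (by positivity)
  refine (h1.comp_add_right c).congr (ae_of_all _ fun s => ?_)
  simp only
  rw [neg_div, neg_mul, div_eq_inv_mul, mul_comm]

private lemma gauss_integral (c b : ℝ) (hb : 0 < b) :
    (∫ s : ℝ, Real.exp (-(s + c)^2 / b)) = Real.sqrt (Real.pi * b) := by
  have h0 : (∫ s : ℝ, Real.exp (-(s + c)^2 / b))
      = ∫ s : ℝ, (fun u : ℝ => Real.exp (-b⁻¹ * u ^ 2)) (s + c) := by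
    congr 1; funext s; simp only; rw [neg_div, neg_mul, div_eq_inv_mul, mul_comm]
  have h1 := integral_add_right_eq_self (μ := volume) (fun u : ℝ => Real.exp (-b⁻¹ * u ^ 2)) c
  rw [h0, h1, integral_gaussian]
  congr 1
  field_simp

private lemma rpow_neg_half_eq {t : ℝ} (ht : 0 < t) :
    t ^ (-(1:ℝ)/2) = (Real.sqrt t)⁻¹ := by
  rw [Real.sqrt_eq_rpow, ← Real.rpow_neg ht.le]
  norm_num

private lemma rpow_neg_half_mono {x y : ℝ} (hx : 0 < x) (hxy : x ≤ y) :
    y ^ (-(1:ℝ)/2) ≤ x ^ (-(1:ℝ)/2) := by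
  have hy : 0 < y := lt_of_lt_of_le hx hxy
  rw [rpow_neg_half_eq hx, rpow_neg_half_eq hy]
  exact inv_anti₀ (Real.sqrt_pos.2 hx) (Real.sqrt_le_sqrt hxy)

private lemma exp_decay_bound (k t : ℝ) (hk : 0 < k) (ht : 0 ≤ t) :
    Real.exp (-(k * t)) ≤ (max 1 k⁻¹) * (1 + t) ^ (-(1:ℝ)/2) := by
  set K := max 1 k⁻¹ with hK
  have hK1 : (1:ℝ) ≤ K := le_max_left _ _
  have hKpos : 0 < K := lt_of_lt_of_le one_pos hK1
  have hKk : 1 ≤ K * k := by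
    calc (1:ℝ) = k⁻¹ * k := (inv_mul_cancel₀ hk.ne').symm
    _ ≤ K * k := by gcongr; exact le_max_right _ _
  have hpos1 : (0:ℝ) < 1 + k*t := by positivity
  have hpos2 : (0:ℝ) < 1 + t := by positivity
  have h1 : Real.exp (-(k*t)) ≤ (1 + k*t)⁻¹ := by
    rw [Real.exp_neg]
    apply inv_anti₀ hpos1
    linarith [Real.add_one_le_exp (k*t)]
  have h2 : (1 + t) ≤ K * (1 + k*t) := by nlinarith [mul_nonneg (sub_nonneg.2 hKk) ht]
  have h3 := inv_anti₀ hpos2 h2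
  rw [mul_inv] at h3
  have h4 := mul_le_mul_of_nonneg_left h3 hKpos.le
  rw [← mul_assoc, mul_inv_cancel₀ hKpos.ne', one_mul] at h4
  have h5 : (1 + t)⁻¹ ≤ (1 + t) ^ (-(1:ℝ)/2) := by
    rw [← Real.rpow_neg_one]
    exact Real.rpow_le_rpow_of_exponent_le (by linarith) (by norm_num)
  calc Real.exp (-(k*t)) ≤ (1 + k*t)⁻¹ := h1
  _ ≤ K * (1+t)⁻¹ := h4
  _ ≤ K * (1+t) ^ (-(1:ℝ)/2) := by gcongr
  _ = K * (1 + t) ^ (-(1:ℝ)/2) := rfl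

private lemma one_add_abs_integrable :
    Integrable fun y : ℝ => (1 + |y|) ^ (-(3:ℝ)/2) := by
  have h := integrable_one_add_norm (E := ℝ) (μ := volume) (r := 3/2)
    (by simp; norm_num)
  refine h.congr (ae_of_all _ fun y => ?_)
  simp only [Real.norm_eq_abs]
  norm_num

private lemma tail_integral {c : ℝ} (hc : c ≤ 0) :
    (∫ y in Set.Iic c, (1 + |y|) ^ (-(3:ℝ)/2)) = 2 * (1 - c) ^ (-(1:ℝ)/2) := by
  have heq : ∀ y ∈ Set.Iic c, (1 + |y|) ^ (-(3:ℝ)/2) = (1 - y) ^ (-(3:ℝ)/2) := by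
    intro y hy
    rw [abs_of_nonpos (le_trans hy hc)]
    ring_nf
  have h1 : (∫ y in Set.Iic c, (1 + |y|) ^ (-(3:ℝ)/2))
      = ∫ y in Set.Iic c, (1 - y) ^ (-(3:ℝ)/2) :=
    setIntegral_congr_fun measurableSet_Iic heq
  rw [h1]
  have hderiv : ∀ y ∈ Set.Iic c, HasDerivAt (fun y : ℝ => 2 * (1 - y) ^ (-(1:ℝ)/2))
      ((1 - y) ^ (-(3:ℝ)/2)) y := by
    intro y hy
    have hy1 : (0:ℝ) < 1 - y := by have := le_trans hy.out hc; linarith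
    have h1 : HasDerivAt (fun y : ℝ => 1 - y) (-1) y := (hasDerivAt_id y).const_sub 1
    have h2 := (h1.rpow_const (p := -(1:ℝ)/2) (Or.inl hy1.ne')).const_mul 2
    refine h2.congr_deriv ?_
    rw [show (-(1:ℝ)/2 - 1) = -(3:ℝ)/2 by norm_num]
    ring
  have hint : IntegrableOn (fun y : ℝ => (1 - y) ^ (-(3:ℝ)/2)) (Set.Iic c) := by
    refine (one_add_abs_integrable.integrableOn).congr_fun ?_ measurableSet_Iic
    exact heq
  have htend : Tendsto (fun y : ℝ => 2 * (1 - y) ^ (-(1:ℝ)/2)) atBot (𝓝 0) := by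
    have h1 : Tendsto (fun y : ℝ => 1 - y) atBot atTop :=
      tendsto_const_nhds.add_atTop (tendsto_neg_atBot_atTop)
    have h2 : Tendsto (fun x : ℝ => x ^ (-((1:ℝ)/2))) atTop (𝓝 0) :=
      tendsto_rpow_neg_atTop (by norm_num)
    have h3 := (h2.comp h1).const_mul (2:ℝ)
    simpa [neg_div, Function.comp] using h3
  have := integral_Iic_of_hasDerivAt_of_tendsto' hderiv hint htend
  rw [this]
  ring

theorem stmt11 (a M C₀ E₀ : ℝ) (ha : 0 < a) (hM : 0 < M) (hC₀ : 0 < C₀) (hE₀ : 0 < E₀)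
    (v₀ : ℝ → ℝ) (e e' : ℝ → ℝ → ℝ)
    (hint : MeasureTheory.Integrable v₀)
    (hmass : (∫ y : ℝ, v₀ y) = 0)
    (hv₀ : ∀ y, |v₀ y| ≤ E₀ * (1 + |y|) ^ (-(3 : ℝ) / 2))
    (hderiv : ∀ t, 0 < t → ∀ y, HasDerivAt (fun y => e y t) (e' y t) y)
    (he' : ∀ y t, 0 < t → |e' y t| ≤ C₀ * t ^ (-(1 : ℝ) / 2) * Real.exp (-(y + a * t) ^ 2 / (M * t)))
    (hlimtop : ∀ t, 0 < t → ∃ l : ℝ, Filter.Tendsto (fun y => e y t) Filter.atTop (nhds l))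
    (hlimbot : ∀ t, 0 < t → Filter.Tendsto (fun y => e y t) Filter.atBot (nhds 0)) :
    ∃ C : ℝ, 0 < C ∧ ∀ t : ℝ, 0 < t →
      |∫ y : ℝ, e y t * v₀ y| ≤ C * E₀ * (1 + t) ^ (-(1 : ℝ) / 2) := by
  set B : ℝ := C₀ * Real.sqrt (Real.pi * M) with hB
  set D : ℝ := C₀ * Real.sqrt (Real.pi * (2 * M)) with hD
  set k : ℝ := a ^ 2 / (8 * M) with hk
  set m : ℝ := min 1 (a / 2) with hm
  set K : ℝ := max 1 k⁻¹ with hKdef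
  set I₀ : ℝ := ∫ y : ℝ, |v₀ y| with hI₀
  have hkpos : 0 < k := by rw [hk]; positivity
  have hmpos : 0 < m := lt_min one_pos (by positivity)
  have hBpos : 0 < B := by rw [hB]; positivity
  have hDpos : 0 < D := by rw [hD]; positivity
  have hKpos : 0 < K := lt_of_lt_of_le one_pos (le_max_left _ _)
  have hI₀nonneg : 0 ≤ I₀ := integral_nonneg fun y => abs_nonneg _
  refine ⟨4 * B * m ^ (-(1:ℝ)/2) + D * I₀ * K / E₀ + 1, by positivity, ?_⟩
  intro t ht
  obtain ⟨l, hl⟩ := hlimtop t ht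
  have hMt : 0 < M * t := mul_pos hM ht
  have hMt2 : 0 < 2 * (M * t) := by positivity
  -- measurability and integrability of e'
  have hmeas : Measurable fun s => e' s t := by
    have h : (fun s => e' s t) = deriv (fun y => e y t) :=
      funext fun s => ((hderiv t ht s).deriv).symm
    rw [h]; exact measurable_deriv _
  have hgauss_int : Integrable fun s : ℝ => Real.exp (-(s + a*t)^2 / (M*t)) :=
    gauss_integrable _ _ hMt
  have hgauss2_int : Integrable fun s : ℝ => Real.exp (-(s + a*t)^2 / (2*(M*t))) :=
    gauss_integrable _ _ hMt2
  have he'int : Integrable fun s => e' s t := by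
    refine (hgauss_int.const_mul (C₀ * t ^ (-(1:ℝ)/2))).mono'
      hmeas.aestronglyMeasurable (ae_of_all _ fun s => ?_)
    rw [Real.norm_eq_abs]
    exact he' s t ht
  have habs : Integrable fun s => |e' s t| := he'int.abs
  -- sqrt computations
  have hsqrt_ne : Real.sqrt t ≠ 0 := (Real.sqrt_ne_zero'.2 ht)
  have hsqrt1 : t ^ (-(1:ℝ)/2) * Real.sqrt (Real.pi * (M*t)) = Real.sqrt (Real.pi * M) := by
    rw [rpow_neg_half_eq ht, show Real.pi * (M*t) = (Real.pi*M)*t by ring,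
      Real.sqrt_mul (by positivity) t, mul_comm (Real.sqrt (Real.pi*M)) (Real.sqrt t),
      ← mul_assoc, inv_mul_cancel₀ hsqrt_ne, one_mul]
  have hsqrt2 : t ^ (-(1:ℝ)/2) * Real.sqrt (Real.pi * (2*(M*t))) = Real.sqrt (Real.pi * (2*M)) := by
    rw [rpow_neg_half_eq ht, show Real.pi * (2*(M*t)) = (Real.pi*(2*M))*t by ring,
      Real.sqrt_mul (by positivity) t, mul_comm (Real.sqrt (Real.pi*(2*M))) (Real.sqrt t),
      ← mul_assoc, inv_mul_cancel₀ hsqrt_ne, one_mul]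
  -- total integral of |e'| is at most B
  have hIabs_le : (∫ s : ℝ, |e' s t|) ≤ B := by
    calc (∫ s : ℝ, |e' s t|)
        ≤ ∫ s : ℝ, C₀ * t ^ (-(1:ℝ)/2) * Real.exp (-(s + a*t)^2/(M*t)) :=
          integral_mono habs (hgauss_int.const_mul _) (fun s => he' s t ht)
    _ = C₀ * t ^ (-(1:ℝ)/2) * ∫ s : ℝ, Real.exp (-(s + a*t)^2/(M*t)) :=
          integral_const_mul _ _
    _ = C₀ * t ^ (-(1:ℝ)/2) * Real.sqrt (Real.pi * (M*t)) := by
          rw [gauss_integral _ _ hMt]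
    _ = B := by rw [hB, mul_assoc, hsqrt1]
  have hIci : ∀ x : ℝ, (∫ s in Set.Ici x, |e' s t|) ≤ B := fun x =>
    (setIntegral_le_integral habs (ae_of_all _ fun s => abs_nonneg _)).trans hIabs_le
  -- increments bounded by tail integrals of |e'|
  have hdiffb : ∀ x y : ℝ, x ≤ y → |e y t - e x t| ≤ ∫ s in Set.Ici x, |e' s t| := by
    intro x y hxy
    have hftc : e y t - e x t = ∫ s in x..y, e' s t :=
      (intervalIntegral.integral_eq_sub_of_hasDerivAt (fun s _ => hderiv t ht s)
        (he'int.intervalIntegrable)).symm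
    rw [hftc]
    calc |∫ s in x..y, e' s t| ≤ ∫ s in x..y, |e' s t| :=
          intervalIntegral.abs_integral_le_integral_abs hxy
    _ = ∫ s in Set.Ioc x y, |e' s t| := intervalIntegral.integral_of_le hxy
    _ ≤ ∫ s in Set.Ici x, |e' s t| :=
          setIntegral_mono_set habs.integrableOn (ae_of_all _ fun s => abs_nonneg _)
            (HasSubset.Subset.eventuallyLE (fun s hs => le_of_lt hs.1))
  have heB : ∀ y, |e y t| ≤ B := by
    intro y
    have h2 : Tendsto (fun x => e y t - e x t) atBot (𝓝 (e y t - 0)) :=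
      tendsto_const_nhds.sub (hlimbot t ht)
    have h1 : Tendsto (fun x => |e y t - e x t|) atBot (𝓝 |e y t|) := by
      simpa using h2.abs
    apply le_of_tendsto h1
    filter_upwards [eventually_le_atBot y] with x hx
    exact (hdiffb x y hx).trans (hIci x)
  have hlB : |l| ≤ B :=
    le_of_tendsto hl.abs (Eventually.of_forall heB)
  -- tail bound for the difference to the limit
  have htail : ∀ y : ℝ, -(a*t/2) ≤ y →
      |l - e y t| ≤ D * Real.exp (-(k * t)) := by
    intro y hy
    have h1 : |l - e y t| ≤ ∫ s in Set.Ici y, |e' s t| := by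
      have h2 : Tendsto (fun z => |e z t - e y t|) atTop (𝓝 |l - e y t|) := by
        simpa using ((hl.sub_const (e y t)).abs)
      apply le_of_tendsto h2
      filter_upwards [eventually_ge_atTop y] with z hz
      exact hdiffb y z hz
    have h3 : ∀ s ∈ Set.Ici y, |e' s t| ≤
        (C₀ * t ^ (-(1:ℝ)/2) * Real.exp (-(k * t))) * Real.exp (-(s + a*t)^2 / (2*(M*t))) := by
      intro s hs
      have hs' : a*t/2 ≤ s + a*t := by
        have := hs.out
        have hat : 0 < a * t := mul_pos ha ht
        linarith
      have hsq : (a*t/2)^2 ≤ (s + a*t)^2 := by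
        have h0 : (0:ℝ) ≤ a*t/2 := by positivity
        nlinarith
      have key : k * t + (s + a*t)^2/(2*(M*t)) ≤ (s + a*t)^2/(M*t) := by
        have keq : (s + a*t)^2/(M*t) = (s + a*t)^2/(2*(M*t)) + (s + a*t)^2/(2*(M*t)) := by
          field_simp
          ring
        have key2 : k * t ≤ (s + a*t)^2/(2*(M*t)) := by
          rw [hk, div_mul_eq_mul_div, div_le_div_iff₀ (by positivity) (by positivity)]
          nlinarith
        linarith
      have hexp : Real.exp (-(s + a*t)^2/(M*t)) ≤
          Real.exp (-(k * t)) * Real.exp (-(s + a*t)^2/(2*(M*t))) := by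
        rw [← Real.exp_add]
        apply Real.exp_le_exp.2
        have e1 : -(s + a*t)^2/(M*t) = -((s + a*t)^2/(M*t)) := by ring
        have e2 : -(s + a*t)^2/(2*(M*t)) = -((s + a*t)^2/(2*(M*t))) := by ring
        rw [e1, e2]
        linarith
      calc |e' s t| ≤ C₀ * t ^ (-(1:ℝ)/2) * Real.exp (-(s + a*t)^2/(M*t)) := he' s t ht
      _ ≤ C₀ * t ^ (-(1:ℝ)/2) *
            (Real.exp (-(k * t)) * Real.exp (-(s + a*t)^2/(2*(M*t)))) := by
          apply mul_le_mul_of_nonneg_left hexp (by positivity)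
      _ = (C₀ * t ^ (-(1:ℝ)/2) * Real.exp (-(k * t))) * Real.exp (-(s + a*t)^2/(2*(M*t))) := by
          ring
    have h4 : (∫ s in Set.Ici y, |e' s t|) ≤
        ∫ s in Set.Ici y, (C₀ * t ^ (-(1:ℝ)/2) * Real.exp (-(k * t))) *
          Real.exp (-(s + a*t)^2 / (2*(M*t))) :=
      setIntegral_mono_on habs.integrableOn
        ((hgauss2_int.const_mul _).integrableOn) measurableSet_Ici h3
    have h5 : (∫ s in Set.Ici y, (C₀ * t ^ (-(1:ℝ)/2) * Real.exp (-(k * t))) *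
          Real.exp (-(s + a*t)^2 / (2*(M*t)))) ≤
        ∫ s : ℝ, (C₀ * t ^ (-(1:ℝ)/2) * Real.exp (-(k * t))) *
          Real.exp (-(s + a*t)^2 / (2*(M*t))) :=
      setIntegral_le_integral (hgauss2_int.const_mul _)
        (ae_of_all _ fun s => by positivity)
    have h6 : (∫ s : ℝ, (C₀ * t ^ (-(1:ℝ)/2) * Real.exp (-(k * t))) *
          Real.exp (-(s + a*t)^2 / (2*(M*t)))) = D * Real.exp (-(k * t)) := by
      rw [integral_const_mul, gauss_integral _ _ hMt2, hD]
      rw [show C₀ * t ^ (-(1:ℝ)/2) * Real.exp (-(k*t)) * Real.sqrt (Real.pi * (2*(M*t)))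
        = C₀ * (t ^ (-(1:ℝ)/2) * Real.sqrt (Real.pi * (2*(M*t)))) * Real.exp (-(k*t)) by ring,
        hsqrt2]
    calc |l - e y t| ≤ ∫ s in Set.Ici y, |e' s t| := h1
    _ ≤ _ := h4
    _ ≤ _ := h5
    _ = D * Real.exp (-(k * t)) := h6
  -- integrability of products
  have hecont : Continuous fun y => e y t :=
    continuous_iff_continuousAt.2 fun y => (hderiv t ht y).continuousAt
  have hev : Integrable fun y => e y t * v₀ y := by
    refine hint.bdd_mul hecont.aestronglyMeasurable (c := B) (ae_of_all _ fun y => ?_)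
    rw [Real.norm_eq_abs]; exact heB y
  have hφint : Integrable fun y => (e y t - l) * v₀ y := by
    refine (hev.sub (hint.const_mul l)).congr (ae_of_all _ fun y => ?_)
    simp only [Pi.sub_apply]
    ring
  have hφabs : Integrable fun y => |(e y t - l) * v₀ y| := hφint.abs
  -- replace e by e - l
  have hsplit0 : (∫ y : ℝ, e y t * v₀ y) = ∫ y : ℝ, (e y t - l) * v₀ y := by
    calc (∫ y : ℝ, e y t * v₀ y) = ∫ y : ℝ, ((e y t - l) * v₀ y + l * v₀ y) := by
          congr 1; funext y; ring
    _ = (∫ y : ℝ, (e y t - l) * v₀ y) + ∫ y : ℝ, l * v₀ y :=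
          integral_add hφint (hint.const_mul l)
    _ = ∫ y : ℝ, (e y t - l) * v₀ y := by
          rw [integral_const_mul, hmass, mul_zero, add_zero]
  set c : ℝ := -(a*t/2) with hc
  have hc0 : c ≤ 0 := by rw [hc]; nlinarith [mul_pos ha ht]
  have hsplit : (∫ y : ℝ, |(e y t - l) * v₀ y|)
      = (∫ y in Set.Iic c, |(e y t - l) * v₀ y|) + ∫ y in Set.Ioi c, |(e y t - l) * v₀ y| :=
    (intervalIntegral.integral_Iic_add_Ioi hφabs.integrableOn hφabs.integrableOn).symm
  -- piece 1 : the far left tail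
  have hone := one_add_abs_integrable
  have piece1 : (∫ y in Set.Iic c, |(e y t - l) * v₀ y|)
      ≤ 2*B*E₀ * (2 * (1 - c) ^ (-(1:ℝ)/2)) := by
    have hpt : ∀ y ∈ Set.Iic c, |(e y t - l) * v₀ y|
        ≤ (2*B*E₀) * (1 + |y|) ^ (-(3:ℝ)/2) := by
      intro y _
      rw [abs_mul]
      have h1 : |e y t - l| ≤ 2*B := by
        calc |e y t - l| ≤ |e y t| + |l| := abs_sub _ _
        _ ≤ B + B := add_le_add (heB y) hlB
        _ = 2*B := by ring
      calc |e y t - l| * |v₀ y| ≤ (2*B) * (E₀ * (1 + |y|) ^ (-(3:ℝ)/2)) := by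
            apply mul_le_mul h1 (hv₀ y) (abs_nonneg _) (by positivity)
      _ = (2*B*E₀) * (1 + |y|) ^ (-(3:ℝ)/2) := by ring
    calc (∫ y in Set.Iic c, |(e y t - l) * v₀ y|)
        ≤ ∫ y in Set.Iic c, (2*B*E₀) * (1 + |y|) ^ (-(3:ℝ)/2) :=
          setIntegral_mono_on hφabs.integrableOn
            ((hone.const_mul _).integrableOn) measurableSet_Iic hpt
    _ = (2*B*E₀) * ∫ y in Set.Iic c, (1 + |y|) ^ (-(3:ℝ)/2) := integral_const_mul _ _
    _ = 2*B*E₀ * (2 * (1 - c) ^ (-(1:ℝ)/2)) := by rw [tail_integral hc0]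
  -- piece 2 : the bulk
  have piece2 : (∫ y in Set.Ioi c, |(e y t - l) * v₀ y|)
      ≤ D * Real.exp (-(k*t)) * I₀ := by
    have hpt : ∀ y ∈ Set.Ioi c, |(e y t - l) * v₀ y|
        ≤ (D * Real.exp (-(k*t))) * |v₀ y| := by
      intro y hy
      rw [abs_mul]
      have h1 : |e y t - l| ≤ D * Real.exp (-(k*t)) := by
        rw [abs_sub_comm]
        exact htail y (le_of_lt hy.out)
      exact mul_le_mul_of_nonneg_right h1 (abs_nonneg _)
    calc (∫ y in Set.Ioi c, |(e y t - l) * v₀ y|)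
        ≤ ∫ y in Set.Ioi c, (D * Real.exp (-(k*t))) * |v₀ y| :=
          setIntegral_mono_on hφabs.integrableOn
            ((hint.abs.const_mul _).integrableOn) measurableSet_Ioi hpt
    _ = (D * Real.exp (-(k*t))) * ∫ y in Set.Ioi c, |v₀ y| := integral_const_mul _ _
    _ ≤ (D * Real.exp (-(k*t))) * I₀ := by
          apply mul_le_mul_of_nonneg_left _ (by positivity)
          exact setIntegral_le_integral hint.abs (ae_of_all _ fun y => abs_nonneg _)
  -- bounding the two pieces in terms of (1+t)^(-1/2)
  have hbound1 : 2*B*E₀ * (2 * (1 - c) ^ (-(1:ℝ)/2))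
      ≤ 4*B*E₀ * (m ^ (-(1:ℝ)/2) * (1+t) ^ (-(1:ℝ)/2)) := by
    have h1c : (1:ℝ) - c = 1 + a*t/2 := by rw [hc]; ring
    have hm1 : m ≤ 1 := min_le_left _ _
    have hm2 : m ≤ a/2 := min_le_right _ _
    have hble : m * (1+t) ≤ 1 - c := by
      rw [h1c]
      nlinarith [ht.le]
    have h2 : (1 - c) ^ (-(1:ℝ)/2) ≤ (m * (1+t)) ^ (-(1:ℝ)/2) :=
      rpow_neg_half_mono (by positivity) hble
    have h3 : (m * (1+t)) ^ (-(1:ℝ)/2) = m ^ (-(1:ℝ)/2) * (1+t) ^ (-(1:ℝ)/2) :=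
      Real.mul_rpow hmpos.le (by positivity)
    calc 2*B*E₀ * (2 * (1 - c) ^ (-(1:ℝ)/2))
        ≤ 2*B*E₀ * (2 * (m * (1+t)) ^ (-(1:ℝ)/2)) := by
          apply mul_le_mul_of_nonneg_left _ (by positivity)
          exact mul_le_mul_of_nonneg_left h2 (by norm_num)
    _ = 4*B*E₀ * (m ^ (-(1:ℝ)/2) * (1+t) ^ (-(1:ℝ)/2)) := by rw [h3]; ring
  have hbound2 : D * Real.exp (-(k*t)) * I₀ ≤ D * I₀ * K * (1+t) ^ (-(1:ℝ)/2) := by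
    have h1 := exp_decay_bound k t hkpos ht.le
    calc D * Real.exp (-(k*t)) * I₀ ≤ D * (K * (1+t) ^ (-(1:ℝ)/2)) * I₀ := by
          apply mul_le_mul_of_nonneg_right _ hI₀nonneg
          exact mul_le_mul_of_nonneg_left h1 hDpos.le
    _ = D * I₀ * K * (1+t) ^ (-(1:ℝ)/2) := by ring
  -- final assembly
  have habs_le : |∫ y : ℝ, e y t * v₀ y| ≤ ∫ y : ℝ, |(e y t - l) * v₀ y| := by
    rw [hsplit0]
    have h := norm_integral_le_integral_norm (μ := volume) (fun y => (e y t - l) * v₀ y)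
    simpa only [Real.norm_eq_abs] using h
  have hfinal : (∫ y : ℝ, |(e y t - l) * v₀ y|)
      ≤ (4*B* m ^ (-(1:ℝ)/2) * E₀ + D * I₀ * K) * (1+t) ^ (-(1:ℝ)/2) := by
    rw [hsplit]
    have := add_le_add (piece1.trans hbound1) (piece2.trans hbound2)
    calc (∫ y in Set.Iic c, |(e y t - l) * v₀ y|) + ∫ y in Set.Ioi c, |(e y t - l) * v₀ y|
        ≤ 4*B*E₀ * (m ^ (-(1:ℝ)/2) * (1+t) ^ (-(1:ℝ)/2)) + D * I₀ * K * (1+t) ^ (-(1:ℝ)/2) := this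
    _ = (4*B* m ^ (-(1:ℝ)/2) * E₀ + D * I₀ * K) * (1+t) ^ (-(1:ℝ)/2) := by ring
  refine habs_le.trans (hfinal.trans ?_)
  have hcoef : 4*B* m ^ (-(1:ℝ)/2) * E₀ + D * I₀ * K
      ≤ (4 * B * m ^ (-(1:ℝ)/2) + D * I₀ * K / E₀ + 1) * E₀ := by
    have : D * I₀ * K / E₀ * E₀ = D * I₀ * K := by field_simp
    nlinarith [hE₀]
  apply mul_le_mul_of_nonneg_right hcoef (by positivity)
end

section
/- Let a > 0, M > 0. There is C > 0 such that for all t > 0, ∫_ℝ t^{-1/2} e^{-(y+at)²/(Mt)} (1+|y|)^{-1/2} dy ≤ C (1+t)^{-1/2}. -/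
/-!
Write `w = (y + a t)² / t`. Splitting at `|y + a t| ≤ a t / 2`, either `|y| ≥ a t / 2` or
`w ≥ a² t / 4`, so in both cases `c (1 + t) ≤ (1 + |y|) (1 + w)` for some `c > 0` depending only
on `a`. Since `(1 + w) e^{-w/M}` is bounded, half of the Gaussian factor absorbs `1 + w`, leaving
`(1 + |y|)^{-1/2} e^{-w/M} ≲ (1 + t)^{-1/2} e^{-w/(2M)}`, and the remaining Gaussian has integral
`√(2πM t)`, which cancels `t^{-1/2}`.
-/

open MeasureTheory Real

lemma rpow_neg_one_div_two_eq_inv_sqrt {x : ℝ} (hx : 0 ≤ x) : x ^ (-(1 : ℝ) / 2) = (√x)⁻¹ := by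
  rw [neg_div, rpow_neg hx, ← sqrt_eq_rpow]

lemma mul_rpow_neg_one_div_two_le_of_sq_mul_le {E p q K : ℝ} (hE : 0 ≤ E) (hp : 0 < p)
    (hq : 0 < q) (h : E ^ 2 * q ≤ K * p) :
    E * p ^ (-(1 : ℝ) / 2) ≤ √K * q ^ (-(1 : ℝ) / 2) := by
  have hsqrt : E * √q ≤ √K * √p := by
    simpa only [sqrt_mul (sq_nonneg E), sqrt_sq hE, sqrt_mul' K hp.le] using sqrt_le_sqrt h
  rw [rpow_neg_one_div_two_eq_inv_sqrt hp.le, rpow_neg_one_div_two_eq_inv_sqrt hq.le,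
    ← div_eq_mul_inv, ← div_eq_mul_inv, div_le_div_iff₀ (sqrt_pos.2 hp) (sqrt_pos.2 hq)]
  exact hsqrt

lemma one_add_mul_exp_neg_div_le {M w : ℝ} (hM : 0 < M) (hw : 0 ≤ w) :
    (1 + w) * exp (-w / M) ≤ 1 + M := by
  have hlin : 1 + w ≤ (1 + M) * (1 + w / M) := by
    have : (1 + M) * (1 + w / M) = 1 + w + M + w / M := by field_simp; ring
    rw [this]; linarith [div_nonneg hw hM.le]
  calc (1 + w) * exp (-w / M) ≤ (1 + M) * (1 + w / M) * exp (-w / M) := by gcongr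
    _ ≤ (1 + M) * exp (w / M) * exp (-w / M) := by gcongr; linarith [add_one_le_exp (w / M)]
    _ = 1 + M := by rw [mul_assoc, ← exp_add, neg_div, add_neg_cancel, exp_zero, mul_one]

lemma exists_pos_mul_one_add_le_one_add_abs_mul {a : ℝ} (ha : 0 < a) :
    ∃ c > 0, ∀ t > 0, ∀ y : ℝ, c * (1 + t) ≤ (1 + |y|) * (1 + (y + a * t) ^ 2 / t) := by
  refine ⟨min 1 (min (a / 2) (a ^ 2 / 4)), by positivity, fun t ht y => ?_⟩
  have hc1 := min_le_left 1 (min (a / 2) (a ^ 2 / 4))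
  have hc2 := (min_le_right 1 _).trans (min_le_left (a / 2) (a ^ 2 / 4))
  have hc3 := (min_le_right 1 _).trans (min_le_right (a / 2) (a ^ 2 / 4))
  set c := min 1 (min (a / 2) (a ^ 2 / 4))
  have hw : 0 ≤ (y + a * t) ^ 2 / t := by positivity
  rcases le_or_gt |y + a * t| (a * t / 2) with hnear | hfar
  · have hy : a * t / 2 ≤ |y| := by
      have := abs_sub_abs_le_abs_sub (a * t) (y + a * t)
      rw [show a * t - (y + a * t) = -y by ring, abs_neg, abs_of_pos (by positivity)] at this
      linarith
    have hct : c * t ≤ a / 2 * t := mul_le_mul_of_nonneg_right hc2 ht.le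
    calc c * (1 + t) ≤ 1 + |y| := by linarith
      _ ≤ _ := le_mul_of_one_le_right (by positivity) (by linarith)
  · have hw' : a ^ 2 / 4 * t ≤ (y + a * t) ^ 2 / t := by
      have := pow_le_pow_left₀ (by positivity) hfar.le 2
      rw [le_div_iff₀ ht, ← sq_abs (y + a * t)]
      nlinarith
    have hct : c * t ≤ a ^ 2 / 4 * t := mul_le_mul_of_nonneg_right hc3 ht.le
    calc c * (1 + t) ≤ 1 + (y + a * t) ^ 2 / t := by linarith
      _ ≤ _ := le_mul_of_one_le_left (by positivity) (by linarith [abs_nonneg y])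

lemma exists_integrand_le_gaussian {a M : ℝ} (ha : 0 < a) (hM : 0 < M) :
    ∃ K > 0, ∀ t > 0, ∀ y : ℝ,
      t ^ (-(1 : ℝ) / 2) * exp (-(y + a * t) ^ 2 / (M * t)) * (1 + |y|) ^ (-(1 : ℝ) / 2) ≤
        K * (1 + t) ^ (-(1 : ℝ) / 2) *
          (t ^ (-(1 : ℝ) / 2) * exp (-(y + a * t) ^ 2 / (2 * M * t))) := by
  obtain ⟨c, hc, hsplit⟩ := exists_pos_mul_one_add_le_one_add_abs_mul ha
  refine ⟨√((1 + M) / c), sqrt_pos.2 (by positivity), fun t ht y => ?_⟩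
  have hE2 : exp (-(y + a * t) ^ 2 / (M * t)) = exp (-(y + a * t) ^ 2 / (2 * M * t)) ^ 2 := by
    rw [← exp_nat_mul]; congr 1; field_simp; ring
  set w := (y + a * t) ^ 2 / t
  set E := exp (-(y + a * t) ^ 2 / (2 * M * t))
  have hEw : E ^ 2 = exp (-w / M) := by
    rw [← hE2]; simp only [w]; rw [neg_div, neg_div, div_div, mul_comm t M]
  have hsq : E ^ 2 * (1 + t) ≤ (1 + M) / c * (1 + |y|) := by
    rw [div_mul_eq_mul_div, le_div_iff₀' hc, hEw]
    calc c * (exp (-w / M) * (1 + t)) = c * (1 + t) * exp (-w / M) := by ring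
      _ ≤ (1 + |y|) * (1 + w) * exp (-w / M) := by gcongr ?_ * _; exact hsplit t ht y
      _ ≤ (1 + |y|) * (1 + M) := by
        rw [mul_assoc]; gcongr; exact one_add_mul_exp_neg_div_le hM (by positivity)
      _ = (1 + M) * (1 + |y|) := by ring
  have hhalf := mul_rpow_neg_one_div_two_le_of_sq_mul_le (exp_pos _).le (by positivity)
    (by linarith) hsq
  rw [hE2]
  calc t ^ (-(1 : ℝ) / 2) * E ^ 2 * (1 + |y|) ^ (-(1 : ℝ) / 2)
      = t ^ (-(1 : ℝ) / 2) * E * (E * (1 + |y|) ^ (-(1 : ℝ) / 2)) := by ring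
    _ ≤ t ^ (-(1 : ℝ) / 2) * E * (√((1 + M) / c) * (1 + t) ^ (-(1 : ℝ) / 2)) :=
        mul_le_mul_of_nonneg_left hhalf (by positivity)
    _ = _ := by ring

lemma exp_neg_add_sq_div_eq (b s : ℝ) :
    (fun x : ℝ => exp (-(x + b) ^ 2 / s)) = fun x => exp (-s⁻¹ * (x + b) ^ 2) := by
  ext x; ring_nf

lemma integral_exp_neg_add_sq_div (b s : ℝ) :
    ∫ x : ℝ, exp (-(x + b) ^ 2 / s) = √(π * s) := by
  rw [exp_neg_add_sq_div_eq, integral_add_right_eq_self (fun x => exp (-s⁻¹ * x ^ 2)), integral_gaussian,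
    div_inv_eq_mul]

lemma integrable_exp_neg_add_sq_div (b : ℝ) {s : ℝ} (hs : 0 < s) :
    Integrable fun x : ℝ => exp (-(x + b) ^ 2 / s) := by
  rw [exp_neg_add_sq_div_eq]
  exact (integrable_exp_neg_mul_sq (inv_pos.2 hs)).comp_add_right b

theorem stmt12 (a M : ℝ) (ha : 0 < a) (hM : 0 < M) :
    ∃ C : ℝ, 0 < C ∧ ∀ t : ℝ, 0 < t →
      (∫ y : ℝ, t ^ (-(1 : ℝ) / 2) * Real.exp (-(y + a * t) ^ 2 / (M * t)) *
        (1 + |y|) ^ (-(1 : ℝ) / 2)) ≤ C * (1 + t) ^ (-(1 : ℝ) / 2) := by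
  obtain ⟨K, hK, hle⟩ := exists_integrand_le_gaussian ha hM
  refine ⟨K * √(2 * π * M), by positivity, fun t ht => ?_⟩
  have hs : 0 < 2 * M * t := by positivity
  calc _ ≤ ∫ y : ℝ, K * (1 + t) ^ (-(1 : ℝ) / 2) *
          (t ^ (-(1 : ℝ) / 2) * exp (-(y + a * t) ^ 2 / (2 * M * t))) :=
        integral_mono_of_nonneg (.of_forall fun y => by positivity)
          (((integrable_exp_neg_add_sq_div _ hs).const_mul _).const_mul _) (.of_forall (hle t ht))
    _ = K * (1 + t) ^ (-(1 : ℝ) / 2) * ((√t)⁻¹ * √(π * (2 * M * t))) := by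
        rw [integral_const_mul, integral_const_mul, integral_exp_neg_add_sq_div,
          rpow_neg_one_div_two_eq_inv_sqrt ht.le]
    _ = K * √(2 * π * M) * (1 + t) ^ (-(1 : ℝ) / 2) := by
        have : 0 < √t := sqrt_pos.2 ht
        rw [show π * (2 * M * t) = 2 * π * M * t by ring, sqrt_mul (by positivity)]
        field_simp
end

section
/- Let a_j > 0 > a_k and M > 0, γ sufficiently large (depending on a_j, a_k). Then there is η > 0 such that for all t > 0 and s ∈ [0, t/γ] ∪ [t - t/γ, t], |a_j(t-s) + a_k s| ≥ η t. Consequently, t^{-1/2}∫_0^t (1+s)^{-1/2} exp(-(a_j(t-s)+a_k s)²/(Mt)) ds ≤ C(1+t)^{-1/2}. -/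
open MeasureTheory Real in
set_option maxHeartbeats 1000000 in
theorem stmt13 (aj ak M : ℝ) (haj : 0 < aj) (hak : ak < 0) (hM : 0 < M) :
    (∃ γ₀ : ℝ, 0 < γ₀ ∧ ∀ γ : ℝ, γ₀ ≤ γ → ∃ η : ℝ, 0 < η ∧
      ∀ t : ℝ, 0 < t → ∀ s : ℝ, 0 ≤ s → s ≤ t → (s ≤ t / γ ∨ t - t / γ ≤ s) →
        η * t ≤ |aj * (t - s) + ak * s|) ∧
    (∃ C : ℝ, 0 < C ∧ ∀ t : ℝ, 0 < t →
      t ^ (-(1 : ℝ) / 2) *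
        (∫ s in Set.Ioc (0 : ℝ) t,
          (1 + s) ^ (-(1 : ℝ) / 2) * Real.exp (-(aj * (t - s) + ak * s) ^ 2 / (M * t))) ≤
      C * (1 + t) ^ (-(1 : ℝ) / 2)) := by
  constructor
  · have hm0 : 0 < min aj (-ak) := lt_min haj (by linarith)
    set m := min aj (-ak) with hm
    have hb : 0 < aj - ak := by linarith
    refine ⟨2*(aj-ak)/m, by positivity, fun γ hγ => ⟨m/2, by positivity, ?_⟩⟩
    intro t ht s hs0 hst hcase
    have hγ0 : 0 < γ := lt_of_lt_of_le (by positivity) hγ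
    have hbγ : (aj - ak)/γ ≤ m/2 := by
      rw [div_le_iff₀ hγ0]
      calc aj - ak = m/2 * (2*(aj-ak)/m) := by field_simp
        _ ≤ m/2 * γ := by apply mul_le_mul_of_nonneg_left hγ (by positivity)
    have hmaj : m ≤ aj := min_le_left _ _
    have hmak : m ≤ -ak := min_le_right _ _
    rcases hcase with h | h
    · have h1 : (aj - ak) * s ≤ m/2 * t := by
        calc (aj-ak)*s ≤ (aj-ak)*(t/γ) := mul_le_mul_of_nonneg_left h hb.le
          _ = (aj-ak)/γ * t := by ring
          _ ≤ m/2 * t := mul_le_mul_of_nonneg_right hbγ ht.le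
      have h2 : m/2 * t ≤ aj*(t-s)+ak*s := by nlinarith
      exact le_abs.2 (Or.inl h2)
    · have h1 : (aj - ak) * (t - s) ≤ m/2 * t := by
        calc (aj-ak)*(t-s) ≤ (aj-ak)*(t/γ) := by
              apply mul_le_mul_of_nonneg_left (by linarith) hb.le
          _ = (aj-ak)/γ * t := by ring
          _ ≤ m/2 * t := mul_le_mul_of_nonneg_right hbγ ht.le
      have h2 : m/2 * t ≤ -(aj*(t-s)+ak*s) := by nlinarith
      exact le_abs.2 (Or.inr h2)
  · have hb : 0 < aj - ak := by linarith
    have hM' : M ≠ 0 := ne_of_gt hM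
    set b := aj - ak with hbdef
    set η := aj/2 with hη
    set γ := 2*b/aj with hγ
    clear_value b
    have hb' : b ≠ 0 := ne_of_gt hb
    have hη0 : 0 < η := by rw [hη]; positivity
    have hγ0 : 0 < γ := by rw [hγ]; positivity
    set K := Real.sqrt γ * Real.sqrt (π * M) / b with hK
    clear_value γ
    have hK0 : 0 < K := by
      rw [hK]
      exact div_pos (mul_pos (Real.sqrt_pos.2 hγ0) (Real.sqrt_pos.2 (mul_pos pi_pos hM))) hb
    set L := M/η^2 + K with hL
    clear_value η K
    have hL0 : 0 < L := by
      rw [hL]; exact add_pos (div_pos hM (pow_pos hη0 2)) hK0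
    clear_value L
    refine ⟨2 + 2*L, by linarith, ?_⟩
    intro t ht
    have ht' : t ≠ 0 := ne_of_gt ht
    set g : ℝ → ℝ := fun s => (1 + s) ^ (-(1 : ℝ) / 2) * Real.exp (-(aj * (t - s) + ak * s) ^ 2 / (M * t)) with hg
    clear_value g
    have hg_cont : ContinuousOn g (Set.Icc 0 t) := by
      rw [hg]
      apply ContinuousOn.mul
      · apply ContinuousOn.rpow_const (by fun_prop)
        intro x hx
        exact Or.inl (by have := hx.1; positivity)
      · fun_prop
    have hg_int : IntegrableOn g (Set.Ioc 0 t) :=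
      (hg_cont.integrableOn_Icc).mono_set Set.Ioc_subset_Icc_self
    have hg_nonneg : ∀ s, 0 ≤ s → 0 ≤ g s := by
      intro s hs
      rw [hg]
      exact mul_nonneg (Real.rpow_nonneg (by linarith) _) (Real.exp_nonneg _)
    have hg_le_one : ∀ s ∈ Set.Ioc (0:ℝ) t, g s ≤ 1 := by
      intro s hs
      rw [hg]
      have h1 : (1 + s) ^ (-(1 : ℝ) / 2) ≤ 1 :=
        Real.rpow_le_one_of_one_le_of_nonpos (by linarith [hs.1]) (by norm_num)
      have h2 : Real.exp (-(aj * (t - s) + ak * s) ^ 2 / (M * t)) ≤ 1 := by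
        apply Real.exp_le_one_iff.2
        apply div_nonpos_of_nonpos_of_nonneg
        · simp [sq_nonneg]
        · exact (mul_pos hM ht).le
      calc (1 + s) ^ (-(1 : ℝ) / 2) * Real.exp (-(aj * (t - s) + ak * s) ^ 2 / (M * t))
          ≤ 1 * 1 := mul_le_mul h1 h2 (Real.exp_nonneg _) (by norm_num)
        _ = 1 := by norm_num
    set I := ∫ s in Set.Ioc (0 : ℝ) t, g s with hI
    clear_value I
    have hI_nonneg : 0 ≤ I := by
      rw [hI]
      apply setIntegral_nonneg measurableSet_Ioc
      intro s hs; exact hg_nonneg s hs.1.le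
    have hI1 : I ≤ t := by
      rw [hI]
      have h6 := setIntegral_mono_on hg_int
        (integrableOn_const (by rw [Real.volume_Ioc]; exact ENNReal.ofReal_ne_top))
        measurableSet_Ioc hg_le_one
      rw [setIntegral_const, smul_eq_mul, measureReal_def, Real.volume_Ioc, sub_zero,
        ENNReal.toReal_ofReal ht.le, mul_one] at h6
      exact h6
    set p := b^2/(M*t) with hp
    clear_value p
    have hp0 : 0 < p := by rw [hp]; exact div_pos (pow_pos hb 2) (mul_pos hM ht)
    set c := aj*t/b with hc
    clear_value c
    set c₂ := Real.sqrt γ / Real.sqrt t with hc2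
    clear_value c₂
    have hc20 : 0 < c₂ := by
      rw [hc2]; exact div_pos (Real.sqrt_pos.2 hγ0) (Real.sqrt_pos.2 ht)
    set h : ℝ → ℝ := fun s => Real.exp (-(η^2*t/M)) + c₂ * Real.exp (-p * (s - c)^2) with hh
    clear_value h
    have hh_int : IntegrableOn h (Set.Ioc 0 t) := by
      rw [hh]
      apply IntegrableOn.mono_set _ Set.Ioc_subset_Icc_self
      apply ContinuousOn.integrableOn_Icc
      fun_prop
    have hgh : ∀ s ∈ Set.Ioc (0:ℝ) t, g s ≤ h s := by
      intro s hs
      have hs0 : 0 < s := hs.1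
      have hst : s ≤ t := hs.2
      have hexp_eq : Real.exp (-(aj * (t - s) + ak * s) ^ 2 / (M * t))
          = Real.exp (-p * (s - c)^2) := by
        congr 1
        have hb2 : aj - ak ≠ 0 := sub_ne_zero.2 (by linarith)
        rw [hp, hc, hbdef]
        field_simp
        ring
      rcases le_total s (t/γ) with hsc | hsc
      · -- left region : exponential small
        have h2' : b * (t/γ) = aj * t / 2 := by
          rw [hγ]; field_simp
        have hf : η * t ≤ aj * (t - s) + ak * s := by
          have h1 : b * s ≤ b * (t/γ) := mul_le_mul_of_nonneg_left hsc hb.le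
          rw [h2', hbdef] at h1
          rw [hη]
          nlinarith
        have hf2 : (η*t)^2 ≤ (aj * (t - s) + ak * s)^2 := by
          have h0 : 0 ≤ η * t := (mul_pos hη0 ht).le
          nlinarith
        have hexp : Real.exp (-(aj * (t - s) + ak * s) ^ 2 / (M * t)) ≤ Real.exp (-(η^2*t/M)) := by
          apply Real.exp_le_exp.2
          have e3 : -(η^2*t/M) = -((η*t)^2/(M*t)) := by
            rw [show (η*t)^2/(M*t) = η^2*t/M * (t/t) by ring, div_self ht', mul_one]
          rw [e3, ← neg_div]
          exact (div_le_div_iff_of_pos_right (mul_pos hM ht)).2 (neg_le_neg hf2)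
        have h1 : (1 + s) ^ (-(1 : ℝ) / 2) ≤ 1 :=
          Real.rpow_le_one_of_one_le_of_nonpos (by linarith) (by norm_num)
        rw [hg]
        calc (1 + s) ^ (-(1 : ℝ) / 2) * Real.exp (-(aj * (t - s) + ak * s) ^ 2 / (M * t))
            ≤ 1 * Real.exp (-(η^2*t/M)) :=
              mul_le_mul h1 hexp (Real.exp_nonneg _) (by norm_num)
          _ = Real.exp (-(η^2*t/M)) := by norm_num
          _ ≤ h s := by
              rw [hh]; simp only [le_add_iff_nonneg_right]
              exact mul_nonneg hc20.le (Real.exp_nonneg _)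
      · -- right region : prefactor small
        have htγ0 : 0 < t/γ := div_pos ht hγ0
        have h1 : (1 + s) ^ (-(1 : ℝ) / 2) ≤ (t/γ) ^ (-(1 : ℝ) / 2) := by
          apply Real.rpow_le_rpow_of_nonpos htγ0 (by linarith) (by norm_num)
        have h1' : (t/γ) ^ (-(1 : ℝ) / 2) = c₂ := by
          rw [hc2, neg_div, Real.rpow_neg htγ0.le, ← Real.sqrt_eq_rpow,
            Real.sqrt_div ht.le, inv_div]
        have hmain : g s ≤ c₂ * Real.exp (-p * (s - c)^2) := by
          rw [hg]
          simp only
          rw [hexp_eq]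
          exact mul_le_mul_of_nonneg_right (h1'.symm ▸ h1) (Real.exp_nonneg _)
        calc g s ≤ c₂ * Real.exp (-p * (s - c)^2) := hmain
          _ ≤ h s := by
              rw [hh]; simp only [le_add_iff_nonneg_left]
              exact Real.exp_nonneg _
    have hIh : I ≤ ∫ s in Set.Ioc (0:ℝ) t, h s := by
      rw [hI]
      exact setIntegral_mono_on hg_int hh_int measurableSet_Ioc hgh
    have hgauss_int : Integrable (fun s : ℝ => Real.exp (-p * (s - c)^2)) :=
      (integrable_exp_neg_mul_sq hp0).comp_sub_right c
    have hgauss : ∫ s : ℝ, Real.exp (-p * (s - c)^2) = Real.sqrt (π / p) := by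
      rw [show (∫ s : ℝ, Real.exp (-p * (s - c)^2)) = ∫ s : ℝ, Real.exp (-p * s^2) from
        integral_sub_right_eq_self (fun x : ℝ => Real.exp (-p * x^2)) c, integral_gaussian]
    have hset_gauss : ∫ s in Set.Ioc (0:ℝ) t, Real.exp (-p * (s - c)^2) ≤ Real.sqrt (π / p) := by
      rw [← hgauss]
      apply setIntegral_le_integral hgauss_int
      filter_upwards with x using Real.exp_nonneg _
    have hh_val : (∫ s in Set.Ioc (0:ℝ) t, h s) ≤ t * Real.exp (-(η^2*t/M)) + K := by
      rw [hh]
      rw [integral_add (integrableOn_const (C := Real.exp (-(η^2*t/M))) (μ := volume) (s := Set.Ioc (0:ℝ) t) (by rw [Real.volume_Ioc]; exact ENNReal.ofReal_ne_top))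
        ((hgauss_int.integrableOn).const_mul c₂)]
      rw [setIntegral_const, integral_const_mul]
      have hvol : (volume (Set.Ioc (0:ℝ) t)).toReal = t := by
        rw [Real.volume_Ioc, sub_zero, ENNReal.toReal_ofReal ht.le]
      rw [measureReal_def, hvol]
      have hKeq : c₂ * Real.sqrt (π / p) = K := by
        have e1 : π / p = (Real.sqrt (π*M) * Real.sqrt t / b)^2 := by
          rw [div_pow, mul_pow, Real.sq_sqrt (mul_nonneg pi_pos.le hM.le),
            Real.sq_sqrt ht.le, hp]
          field_simp
        rw [e1, Real.sqrt_sq (div_nonneg (mul_nonneg (Real.sqrt_nonneg _) (Real.sqrt_nonneg _)) hb.le),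
          hc2, hK]
        have h2 : Real.sqrt t ≠ 0 := ne_of_gt (Real.sqrt_pos.2 ht)
        rw [show Real.sqrt γ / Real.sqrt t * (Real.sqrt (π*M) * Real.sqrt t / b)
            = Real.sqrt γ * Real.sqrt (π*M) * (Real.sqrt t / Real.sqrt t) / b by ring,
          div_self h2, mul_one]
      have hfin : c₂ * ∫ s in Set.Ioc (0:ℝ) t, Real.exp (-p * (s - c)^2) ≤ K := by
        rw [← hKeq]
        exact mul_le_mul_of_nonneg_left hset_gauss hc20.le
      rw [smul_eq_mul]
      exact add_le_add le_rfl hfin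
    have hte : t * Real.exp (-(η^2*t/M)) ≤ M/η^2 := by
      have hx : η^2*t/M + 1 ≤ Real.exp (η^2*t/M) := Real.add_one_le_exp _
      have hη2 : (0:ℝ) < η^2 := pow_pos hη0 2
      have hd : (0:ℝ) < M/η^2 := div_pos hM hη2
      rw [Real.exp_neg, mul_inv_le_iff₀ (Real.exp_pos _)]
      have e2 : t = M/η^2*(η^2*t/M) := by
        rw [show M/η^2*(η^2*t/M) = t * (η^2/η^2) * (M/M) by ring,
          div_self (ne_of_gt hη2), div_self hM', mul_one, mul_one]
      calc t = M/η^2*(η^2*t/M) := e2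
        _ ≤ M/η^2 * Real.exp (η^2*t/M) :=
            mul_le_mul_of_nonneg_left (by linarith) hd.le
    have hI2 : I ≤ L := by
      rw [hL]; linarith
    -- final arithmetic
    have h1t : (0:ℝ) < 1 + t := by linarith
    have hst0 : 0 < Real.sqrt t := Real.sqrt_pos.2 ht
    have hst1 : 0 < Real.sqrt (1+t) := Real.sqrt_pos.2 h1t
    rw [neg_div, Real.rpow_neg ht.le, Real.rpow_neg h1t.le,
      ← Real.sqrt_eq_rpow, ← Real.sqrt_eq_rpow]
    rw [inv_mul_le_iff₀ hst0]
    have key : I ≤ (2 + 2*L) * Real.sqrt t / Real.sqrt (1+t) := by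
      rcases le_total t 1 with htle | htge
      · have h1 : t ≤ Real.sqrt t := by
          nlinarith [Real.sq_sqrt ht.le, Real.sqrt_nonneg t, Real.sqrt_le_one.2 htle]
        have h2 : Real.sqrt (1+t) ≤ 2 := by
          have h5 : Real.sqrt (1+t) ≤ Real.sqrt 4 := Real.sqrt_le_sqrt (by linarith)
          have h4 : Real.sqrt 4 = 2 := by
            rw [show (4:ℝ) = 2^2 by norm_num, Real.sqrt_sq (by norm_num : (0:ℝ) ≤ 2)]
          linarith
        rw [le_div_iff₀ hst1]
        calc I * Real.sqrt (1+t) ≤ Real.sqrt t * 2 := by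
              apply mul_le_mul (le_trans hI1 h1) h2 hst1.le hst0.le
          _ ≤ (2 + 2*L) * Real.sqrt t := by nlinarith
      · have h2 : Real.sqrt (1+t) ≤ 2 * Real.sqrt t := by
          calc Real.sqrt (1+t) ≤ Real.sqrt (4*t) := Real.sqrt_le_sqrt (by linarith)
            _ = 2 * Real.sqrt t := by
                rw [Real.sqrt_mul (by norm_num : (0:ℝ) ≤ 4), show (4:ℝ) = 2^2 by norm_num,
                  Real.sqrt_sq (by norm_num : (0:ℝ) ≤ 2)]
        have h3 : (2 + 2*L) * Real.sqrt t / (2 * Real.sqrt t) ≤ (2 + 2*L) * Real.sqrt t / Real.sqrt (1+t) :=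
          div_le_div_of_nonneg_left (mul_nonneg (by linarith) hst0.le) hst1 h2
        have h4 : (2 + 2*L) * Real.sqrt t / (2 * Real.sqrt t) = 1 + L := by
          rw [show (2 + 2*L) * Real.sqrt t / (2 * Real.sqrt t)
              = (1 + L) * (Real.sqrt t / Real.sqrt t) by ring,
            div_self (ne_of_gt hst0), mul_one]
        linarith
    calc I ≤ (2 + 2*L) * Real.sqrt t / Real.sqrt (1+t) := key
      _ = Real.sqrt t * ((2 + 2*L) * (Real.sqrt (1+t))⁻¹) := by ring
end

section
/- Let a, b < 0, M > 0. There exist C, M̄ > 0 and ε > 0 such that for all x, y ∈ ℝ, 0 < s < t: exp(-(x-y-a(t-s))²/(M(t-s)))·(1+|y-bs|)^{-3/4} ≤ C[ exp(-(x-a(t-s)-bs)²/(M̄ t))·exp(-ε(x-y-a(t-s))²/(M(t-s)))·(1+|y-bs|)^{-3/4} + exp(-(x-y-a(t-s))²/(M(t-s)))·(1+|y-bs|+|x-a(t-s)-bs|)^{-3/4} ]. -/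
theorem stmt15 (a b M : ℝ) (ha : a < 0) (hb : b < 0) (hM : 0 < M) :
    ∃ C Mbar ε : ℝ, 0 < C ∧ 0 < Mbar ∧ 0 < ε ∧
      ∀ x y s t : ℝ, 0 < s → s < t →
        Real.exp (-(x - y - a * (t - s)) ^ 2 / (M * (t - s))) *
            (1 + |y - b * s|) ^ (-(3 : ℝ) / 4) ≤
        C * (Real.exp (-(x - a * (t - s) - b * s) ^ 2 / (Mbar * t)) *
              Real.exp (-ε * (x - y - a * (t - s)) ^ 2 / (M * (t - s))) *
              (1 + |y - b * s|) ^ (-(3 : ℝ) / 4) +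
            Real.exp (-(x - y - a * (t - s)) ^ 2 / (M * (t - s))) *
              (1 + |y - b * s| + |x - a * (t - s) - b * s|) ^ (-(3 : ℝ) / 4)) := by
  refine ⟨3, 8 * M, 1/2, by norm_num, by positivity, by norm_num, ?_⟩
  intro x y s t hs hst
  have hts : 0 < t - s := sub_pos.mpr hst
  have ht : 0 < t := hs.trans hst
  set z := x - y - a * (t - s) with hz
  set w := y - b * s with hw
  set u := x - a * (t - s) - b * s with huu
  have hu : u = z + w := by rw [hz, hw, huu]; ring
  have hwpos : (0:ℝ) < 1 + |w| := by positivity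
  have hP0 : (0:ℝ) ≤ (1 + |w|) ^ (-(3:ℝ)/4) := Real.rpow_nonneg hwpos.le _
  have hE0 : (0:ℝ) < Real.exp (-z ^ 2 / (M * (t - s))) := Real.exp_pos _
  rcases le_or_gt |u| (2 * |w|) with h | h
  · -- second term dominates
    have hb3 : 1 + |w| + |u| ≤ 3 * (1 + |w|) := by
      have := abs_nonneg w; linarith
    have hbpos : (0:ℝ) < 1 + |w| + |u| := by positivity
    have hr : (3 * (1 + |w|)) ^ (-(3:ℝ)/4) ≤ (1 + |w| + |u|) ^ (-(3:ℝ)/4) :=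
      Real.rpow_le_rpow_of_nonpos hbpos hb3 (by norm_num)
    have hsplit : (3 * (1 + |w|)) ^ (-(3:ℝ)/4)
        = (3:ℝ) ^ (-(3:ℝ)/4) * (1 + |w|) ^ (-(3:ℝ)/4) :=
      Real.mul_rpow (by norm_num) hwpos.le
    have h3 : (1:ℝ)/3 ≤ (3:ℝ) ^ (-(3:ℝ)/4) := by
      have h31 : (3:ℝ) ^ (-1:ℝ) ≤ (3:ℝ) ^ (-(3:ℝ)/4) :=
        Real.rpow_le_rpow_of_exponent_le (by norm_num) (by norm_num)
      rw [Real.rpow_neg_one] at h31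
      linarith [h31]
    have hPle : (1 + |w|) ^ (-(3:ℝ)/4) ≤ 3 * (1 + |w| + |u|) ^ (-(3:ℝ)/4) := by
      have : (1:ℝ)/3 * (1 + |w|) ^ (-(3:ℝ)/4) ≤ (1 + |w| + |u|) ^ (-(3:ℝ)/4) := by
        calc (1:ℝ)/3 * (1 + |w|) ^ (-(3:ℝ)/4)
            ≤ (3:ℝ) ^ (-(3:ℝ)/4) * (1 + |w|) ^ (-(3:ℝ)/4) := by
              exact mul_le_mul_of_nonneg_right h3 hP0
          _ = (3 * (1 + |w|)) ^ (-(3:ℝ)/4) := hsplit.symm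
          _ ≤ (1 + |w| + |u|) ^ (-(3:ℝ)/4) := hr
      linarith
    have hT1 : (0:ℝ) ≤ Real.exp (-u ^ 2 / (8 * M * t)) *
        Real.exp (-(1/2) * z ^ 2 / (M * (t - s))) * (1 + |w|) ^ (-(3:ℝ)/4) := by
      positivity
    have hmain : Real.exp (-z ^ 2 / (M * (t - s))) * (1 + |w|) ^ (-(3:ℝ)/4)
        ≤ 3 * (Real.exp (-z ^ 2 / (M * (t - s))) * (1 + |w| + |u|) ^ (-(3:ℝ)/4)) := by
      have := mul_le_mul_of_nonneg_left hPle hE0.le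
      linarith [this]
    linarith [hmain, hT1]
  · -- first term dominates
    have hzu : |u| ≤ 2 * |z| := by
      have habs : |u| ≤ |z| + |w| := by rw [hu]; exact abs_add_le z w
      linarith
    have hu2 : u ^ 2 ≤ 4 * z ^ 2 := by
      have h1 : |u| ^ 2 ≤ (2 * |z|) ^ 2 := by
        have := abs_nonneg u
        nlinarith
      rw [sq_abs] at h1
      nlinarith [sq_abs z]
    have hdiv : u ^ 2 / (8 * M * t) ≤ 4 * z ^ 2 / (8 * M * (t - s)) :=
      div_le_div₀ (by positivity) hu2 (by positivity) (by nlinarith)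
    have hkey : -z ^ 2 / (M * (t - s))
        ≤ -u ^ 2 / (8 * M * t) + -(1/2) * z ^ 2 / (M * (t - s)) := by
      have heq : -z ^ 2 / (M * (t - s))
          = -(4 * z ^ 2 / (8 * M * (t - s))) + -(1/2) * z ^ 2 / (M * (t - s)) := by
        field_simp
        ring
      rw [heq]
      have : -u ^ 2 / (8 * M * t) = -(u ^ 2 / (8 * M * t)) := by ring
      rw [this]
      linarith [hdiv]
    have hEle : Real.exp (-z ^ 2 / (M * (t - s)))
        ≤ Real.exp (-u ^ 2 / (8 * M * t)) * Real.exp (-(1/2) * z ^ 2 / (M * (t - s))) := by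
      rw [← Real.exp_add]
      exact Real.exp_le_exp.mpr hkey
    have hT2 : (0:ℝ) ≤ Real.exp (-z ^ 2 / (M * (t - s))) *
        (1 + |w| + |u|) ^ (-(3:ℝ)/4) := by positivity
    have hmain : Real.exp (-z ^ 2 / (M * (t - s))) * (1 + |w|) ^ (-(3:ℝ)/4)
        ≤ Real.exp (-u ^ 2 / (8 * M * t)) * Real.exp (-(1/2) * z ^ 2 / (M * (t - s)))
          * (1 + |w|) ^ (-(3:ℝ)/4) :=
      mul_le_mul_of_nonneg_right hEle hP0
    have hT1 : (0:ℝ) ≤ Real.exp (-u ^ 2 / (8 * M * t)) *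
        Real.exp (-(1/2) * z ^ 2 / (M * (t - s))) * (1 + |w|) ^ (-(3:ℝ)/4) := by
      positivity
    linarith [hmain, hT2, hT1]
end

section
/- Let η₀ > 0, A > 0 and a ∈ ℝ. There is a constant C, depending only on η₀ and A, such that for all x ∈ ℝ, t ≥ 0 and all c with |c| ≤ A: ∫_0^t e^{-η₀(t-s)} s^{-1/2}(1+s)^{-1/2}(1+|x - at - c(t-s)|)^{-3/4} ds ≤ C(1+|x-at|)^{-3/4}(1+t)^{-1}. -/
open Real MeasureTheory Set

lemma stmt17_peel (y z B : ℝ) (hz : |z| ≤ B) :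
    (1 + |y - z|) ^ (-(3:ℝ)/4) ≤ (1 + B) ^ ((3:ℝ)/4) * (1 + |y|) ^ (-(3:ℝ)/4) := by
  have hB : 0 ≤ B := le_trans (abs_nonneg z) hz
  have hQ : (0:ℝ) < 1 + |y - z| := by positivity
  have hP : (0:ℝ) < 1 + |y| := by positivity
  have hR : (0:ℝ) < 1 + B := by positivity
  have hbase : 1 + |y| ≤ (1 + B) * (1 + |y - z|) := by
    have h1 : |y| ≤ |y - z| + |z| := by
      have := abs_sub_abs_le_abs_sub y z
      have h2 := abs_add_le (y - z) z
      simpa using h2.trans_eq' (by ring_nf)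
    nlinarith [abs_nonneg (y - z), hz]
  have hpow : (1 + |y|) ^ ((3:ℝ)/4) ≤ (1 + B) ^ ((3:ℝ)/4) * (1 + |y - z|) ^ ((3:ℝ)/4) := by
    rw [← Real.mul_rpow hR.le hQ.le]
    exact Real.rpow_le_rpow hP.le hbase (by norm_num)
  have e1 : (1 + |y - z|) ^ (-(3:ℝ)/4) = ((1 + |y - z|) ^ ((3:ℝ)/4))⁻¹ := by
    rw [← Real.rpow_neg hQ.le]; norm_num
  have e2 : (1 + |y|) ^ (-(3:ℝ)/4) = ((1 + |y|) ^ ((3:ℝ)/4))⁻¹ := by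
    rw [← Real.rpow_neg hP.le]; norm_num
  rw [e1, e2]
  have hq : (0:ℝ) < (1 + |y - z|) ^ ((3:ℝ)/4) := Real.rpow_pos_of_pos hQ _
  have hp : (0:ℝ) < (1 + |y|) ^ ((3:ℝ)/4) := Real.rpow_pos_of_pos hP _
  have hr : (0:ℝ) < (1 + B) ^ ((3:ℝ)/4) := Real.rpow_pos_of_pos hR _
  rw [inv_eq_one_div, inv_eq_one_div, mul_one_div, div_le_div_iff₀ hq hp]
  nlinarith

lemma stmt17_absorb (η A u : ℝ) (hη : 0 < η) (hA : 0 < A) (hu : 0 ≤ u) :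
    Real.exp (-η * u) * (1 + A * u) ^ ((3:ℝ)/4) ≤
      (1 + A) * (1 + 2/η) * Real.exp (-(η/2) * u) := by
  have h0 : (1:ℝ) ≤ 1 + A * u := by nlinarith
  have h1 : (1 + A * u) ^ ((3:ℝ)/4) ≤ 1 + A * u := by
    calc (1 + A * u) ^ ((3:ℝ)/4) ≤ (1 + A * u) ^ (1:ℝ) :=
          Real.rpow_le_rpow_of_exponent_le h0 (by norm_num)
      _ = 1 + A * u := Real.rpow_one _
  have h2 : 1 + A * u ≤ (1 + A) * (1 + u) := by nlinarith
  have h3 : 1 + u ≤ (1 + 2/η) * (1 + η/2 * u) := by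
    have hmul : 2/η * (η/2) = 1 := by field_simp
    have h4 : 0 ≤ η/2 * u := by positivity
    have h6 : 0 < 2/η := by positivity
    nlinarith
  have h5 : 1 + η/2 * u ≤ Real.exp (η/2 * u) := by
    simpa [add_comm] using Real.add_one_le_exp (η/2 * u)
  have hE : 0 < Real.exp (-η * u) := Real.exp_pos _
  have key : (1 + A * u) ≤ (1 + A) * (1 + 2/η) * Real.exp (η/2 * u) := by
    have hK : (0:ℝ) < (1 + A) * (1 + 2/η) := by positivity
    calc 1 + A * u ≤ (1 + A) * (1 + u) := h2
      _ ≤ (1 + A) * ((1 + 2/η) * (1 + η/2 * u)) :=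
          mul_le_mul_of_nonneg_left h3 (by positivity)
      _ = (1 + A) * (1 + 2/η) * (1 + η/2 * u) := by ring
      _ ≤ (1 + A) * (1 + 2/η) * Real.exp (η/2 * u) :=
          mul_le_mul_of_nonneg_left h5 (by positivity)
  calc Real.exp (-η * u) * (1 + A * u) ^ ((3:ℝ)/4)
      ≤ Real.exp (-η * u) * ((1 + A) * (1 + 2/η) * Real.exp (η/2 * u)) := by
        apply mul_le_mul_of_nonneg_left (h1.trans key) hE.le
    _ = (1 + A) * (1 + 2/η) * (Real.exp (-η * u) * Real.exp (η/2 * u)) := by ring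
    _ = (1 + A) * (1 + 2/η) * Real.exp (-(η/2) * u) := by
        rw [← Real.exp_add]; ring_nf


lemma stmt17_rpow_int (t : ℝ) (ht : 0 ≤ t) :
    ∫ s in Set.Ioc (0:ℝ) t, s ^ (-(1:ℝ)/2) = 2 * Real.sqrt t := by
  rw [← intervalIntegral.integral_of_le ht, integral_rpow (Or.inl (by norm_num))]
  have : (-(1:ℝ)/2 + 1) = 1/2 := by norm_num
  rw [this, Real.zero_rpow (by norm_num), Real.sqrt_eq_rpow]
  ring

lemma stmt17_rpow_integrable (t : ℝ) :
    MeasureTheory.IntegrableOn (fun s : ℝ => s ^ (-(1:ℝ)/2)) (Set.Ioc 0 t) :=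
  (intervalIntegral.intervalIntegrable_rpow' (a := 0) (b := t)
    (r := -(1:ℝ)/2) (by norm_num)).1

lemma stmt17_exp_int (μ a b : ℝ) (hμ : μ ≠ 0) :
    ∫ s in a..b, Real.exp (μ * s) = (Real.exp (μ * b) - Real.exp (μ * a)) / μ := by
  have D : ∀ x : ℝ, HasDerivAt (fun y : ℝ => Real.exp (μ * y) / μ) (Real.exp (μ * x)) x := by
    intro x
    have h1 : HasDerivAt (fun y : ℝ => μ * y) μ x := by
      simpa using (hasDerivAt_id x).const_mul μ
    have := (h1.exp).div_const μ
    simpa [mul_comm, mul_div_assoc, mul_div_cancel_left₀ _ hμ] using this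
  have := intervalIntegral.integral_eq_sub_of_hasDerivAt (fun x _ => D x)
    ((Real.continuous_exp.comp (continuous_const.mul continuous_id)).intervalIntegrable a b)
  rw [this]; ring

lemma stmt17_core (μ t : ℝ) (hμ : 0 < μ) (ht : 0 ≤ t) :
    (∫ s in Set.Ioc (0:ℝ) t,
        Real.exp (-μ * (t - s)) * s ^ (-(1 : ℝ) / 2) * (1 + s) ^ (-(1 : ℝ) / 2)) ≤
      (4 + 128/μ^2 + 4/μ) * (1 + t)⁻¹ := by
  set g : ℝ → ℝ := fun s =>
    Real.exp (-μ * (t - s)) * s ^ (-(1 : ℝ) / 2) * (1 + s) ^ (-(1 : ℝ) / 2) with hg_def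
  have h1t : (0:ℝ) < 1 + t := by linarith
  have hCpos : (0:ℝ) < 4 + 128/μ^2 + 4/μ := by positivity
  -- continuity / measurability of g on positive reals
  have hcont : ∀ u v : ℝ, 0 ≤ u → ContinuousOn g (Set.Ioc u v) := by
    intro u v hu
    apply ContinuousOn.mul
    apply ContinuousOn.mul
    · exact (Real.continuous_exp.comp
        (continuous_const.mul (continuous_const.sub continuous_id))).continuousOn
    · exact continuousOn_id.rpow_const fun x hx => Or.inl (ne_of_gt (lt_of_le_of_lt hu hx.1))
    · exact ((continuous_const.add continuous_id).continuousOn).rpow_const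
        fun x hx => Or.inl (by have := lt_of_le_of_lt hu hx.1; show (1:ℝ) + x ≠ 0; positivity)
  have hg_nonneg : ∀ s : ℝ, s ∈ Set.Ioc (0:ℝ) t → 0 ≤ g s := by
    intro s hs
    have h1 : (0:ℝ) ≤ s := hs.1.le
    have h2 : (0:ℝ) ≤ 1 + s := by linarith
    positivity
  have hg_le : ∀ s : ℝ, s ∈ Set.Ioc (0:ℝ) t → g s ≤ s ^ (-(1:ℝ)/2) := by
    intro s hs
    have hE : Real.exp (-μ * (t - s)) ≤ 1 := by
      rw [Real.exp_le_one_iff]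
      nlinarith [hs.2]
    have hT : (1 + s) ^ (-(1:ℝ)/2) ≤ 1 :=
      Real.rpow_le_one_of_one_le_of_nonpos (by linarith [hs.1.le]) (by norm_num)
    have hS : (0:ℝ) ≤ s ^ (-(1:ℝ)/2) := Real.rpow_nonneg hs.1.le _
    calc g s ≤ 1 * s ^ (-(1:ℝ)/2) * 1 :=
          mul_le_mul (mul_le_mul hE le_rfl hS zero_le_one) hT
            (Real.rpow_nonneg (by linarith [hs.1.le]) _) (by simpa using hS)
      _ = s ^ (-(1:ℝ)/2) := by ring
  have hInt_g : MeasureTheory.IntegrableOn g (Set.Ioc 0 t) := by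
    apply (stmt17_rpow_integrable t).mono'
      ((hcont 0 t le_rfl).aestronglyMeasurable measurableSet_Ioc)
    rw [MeasureTheory.ae_restrict_iff' measurableSet_Ioc]
    exact MeasureTheory.ae_of_all _ fun s hs => by
      rw [Real.norm_eq_abs, abs_of_nonneg (hg_nonneg s hs)]; exact hg_le s hs
  by_cases hcase : t ≤ 1
  · -- small time
    calc (∫ s in Set.Ioc (0:ℝ) t, g s) ≤ ∫ s in Set.Ioc (0:ℝ) t, s ^ (-(1:ℝ)/2) :=
          MeasureTheory.setIntegral_mono_on hInt_g (stmt17_rpow_integrable t)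
            measurableSet_Ioc hg_le
      _ = 2 * Real.sqrt t := stmt17_rpow_int t ht
      _ ≤ 4 * (1 + t)⁻¹ := by
          have h1 : Real.sqrt t ≤ 1 := by
            rw [show (1:ℝ) = Real.sqrt 1 by simp]
            exact Real.sqrt_le_sqrt hcase
          rw [show (4:ℝ) * (1+t)⁻¹ = 4 / (1+t) by ring, le_div_iff₀ h1t]
          nlinarith [Real.sqrt_nonneg t]
      _ ≤ (4 + 128/μ^2 + 4/μ) * (1 + t)⁻¹ := by
          apply mul_le_mul_of_nonneg_right _ (by positivity)
          have : (0:ℝ) ≤ 128/μ^2 := by positivity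
          have : (0:ℝ) ≤ 4/μ := by positivity
          linarith
  · -- large time: t ≥ 1
    push_neg at hcase
    have ht1 : (1:ℝ) ≤ t := hcase.le
    have hsplit : Set.Ioc (0:ℝ) (t/2) ∪ Set.Ioc (t/2) t = Set.Ioc (0:ℝ) t :=
      Set.Ioc_union_Ioc_eq_Ioc (by linarith) (by linarith)
    have hIntA : MeasureTheory.IntegrableOn g (Set.Ioc 0 (t/2)) :=
      hInt_g.mono_set (Set.Ioc_subset_Ioc_right (by linarith))
    have hIntB : MeasureTheory.IntegrableOn g (Set.Ioc (t/2) t) :=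
      hInt_g.mono_set (Set.Ioc_subset_Ioc_left (by linarith))
    have hsum : (∫ s in Set.Ioc (0:ℝ) t, g s) =
        (∫ s in Set.Ioc (0:ℝ) (t/2), g s) + ∫ s in Set.Ioc (t/2) t, g s := by
      rw [← hsplit, MeasureTheory.setIntegral_union (Set.Ioc_disjoint_Ioc_of_le le_rfl)
        measurableSet_Ioc hIntA hIntB]
    -- first piece
    have hI1 : (∫ s in Set.Ioc (0:ℝ) (t/2), g s) ≤ 128/μ^2 * (1+t)⁻¹ := by
      have hle : ∀ s ∈ Set.Ioc (0:ℝ) (t/2), g s ≤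
          Real.exp (-μ * (t/2)) * s ^ (-(1:ℝ)/2) := by
        intro s hs
        have hE : Real.exp (-μ * (t - s)) ≤ Real.exp (-μ * (t/2)) := by
          apply Real.exp_le_exp.mpr
          nlinarith [hs.2]
        have hT : (1 + s) ^ (-(1:ℝ)/2) ≤ 1 :=
          Real.rpow_le_one_of_one_le_of_nonpos (by linarith [hs.1.le]) (by norm_num)
        have hS : (0:ℝ) ≤ s ^ (-(1:ℝ)/2) := Real.rpow_nonneg hs.1.le _
        calc g s ≤ (Real.exp (-μ * (t/2)) * s ^ (-(1:ℝ)/2)) * 1 := by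
              apply mul_le_mul _ hT (Real.rpow_nonneg (by linarith [hs.1.le]) _) (by positivity)
              exact mul_le_mul hE le_rfl hS (Real.exp_pos _).le
          _ = Real.exp (-μ * (t/2)) * s ^ (-(1:ℝ)/2) := by ring
      have hIntR : MeasureTheory.IntegrableOn
          (fun s : ℝ => Real.exp (-μ * (t/2)) * s ^ (-(1:ℝ)/2)) (Set.Ioc 0 (t/2)) :=
        (stmt17_rpow_integrable (t/2)).const_mul _
      calc (∫ s in Set.Ioc (0:ℝ) (t/2), g s)
          ≤ ∫ s in Set.Ioc (0:ℝ) (t/2), Real.exp (-μ * (t/2)) * s ^ (-(1:ℝ)/2) :=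
            MeasureTheory.setIntegral_mono_on hIntA hIntR measurableSet_Ioc hle
        _ = Real.exp (-μ * (t/2)) * ∫ s in Set.Ioc (0:ℝ) (t/2), s ^ (-(1:ℝ)/2) :=
            MeasureTheory.integral_const_mul _ _
        _ = Real.exp (-μ * (t/2)) * (2 * Real.sqrt (t/2)) := by
            rw [stmt17_rpow_int (t/2) (by linarith)]
        _ ≤ 128/μ^2 * (1+t)⁻¹ := by
            have hs2 : Real.sqrt (t/2) ≤ t := by
              have h1 : Real.sqrt (t/2) ≤ Real.sqrt t := Real.sqrt_le_sqrt (by linarith)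
              have h2 : Real.sqrt t ≤ t := by
                nlinarith [Real.sq_sqrt ht, Real.sqrt_nonneg t, sq_nonneg (Real.sqrt t - 1)]
              linarith
            have hEeq : Real.exp (-μ * (t/2)) = (Real.exp (μ * (t/2)))⁻¹ := by
              rw [← Real.exp_neg]; ring_nf
            have hElb : μ^2 * t^2 / 16 ≤ Real.exp (μ * (t/2)) := by
              have h3 : Real.exp (μ * (t/2)) = Real.exp (μ * t / 4) ^ 2 := by
                rw [← Real.exp_nat_mul]; norm_num; ring_nf
              have h4 : μ * t / 4 + 1 ≤ Real.exp (μ * t / 4) := by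
                have := Real.add_one_le_exp (μ * t / 4); linarith
              have h5 : 0 ≤ μ * t / 4 := by positivity
              nlinarith [Real.exp_pos (μ * t / 4)]
            have hEpos : (0:ℝ) < Real.exp (μ * (t/2)) := Real.exp_pos _
            rw [hEeq, show (Real.exp (μ*(t/2)))⁻¹ * (2 * Real.sqrt (t/2)) =
              (2 * Real.sqrt (t/2)) / Real.exp (μ*(t/2)) by ring,
              show (128:ℝ)/μ^2 * (1+t)⁻¹ = 128 / (μ^2 * (1+t)) by
                rw [div_mul_eq_div_div]; ring_nf]
            rw [div_le_div_iff₀ hEpos (by positivity)]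
            have hs0 : 0 ≤ Real.sqrt (t/2) := Real.sqrt_nonneg _
            have h6 : 2 * Real.sqrt (t/2) * (μ^2 * (1+t)) ≤ 2 * t * (μ^2 * (1+t)) := by
              apply mul_le_mul_of_nonneg_right _ (by positivity)
              linarith
            have h7 : 0 ≤ μ^2 * t * (t - 1) :=
              mul_nonneg (mul_nonneg (sq_nonneg μ) ht) (by linarith)
            nlinarith [hElb, h6, h7]
    -- second piece
    have hI2 : (∫ s in Set.Ioc (t/2) t, g s) ≤ 4/μ * (1+t)⁻¹ := by
      have hb : ∀ s ∈ Set.Ioc (t/2) t, g s ≤ (4 * (1+t)⁻¹) * Real.exp (-μ * (t - s)) := by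
        intro s hs
        have hspos : (0:ℝ) < s := lt_of_le_of_lt (by linarith) hs.1
        have hhalf : t/2 < s := hs.1
        have hST : s ^ (-(1:ℝ)/2) * (1 + s) ^ (-(1:ℝ)/2) ≤ s⁻¹ := by
          have e : ∀ x:ℝ, 0 ≤ x → x ^ (-(1:ℝ)/2) = (x ^ ((1:ℝ)/2))⁻¹ := by
            intro x hx
            rw [show (-(1:ℝ)/2) = -(1/2) by norm_num, Real.rpow_neg hx]
          have h1 : (1 + s) ^ (-(1:ℝ)/2) ≤ s ^ (-(1:ℝ)/2) := by
            rw [e s hspos.le, e (1+s) (by linarith)]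
            apply inv_anti₀ (Real.rpow_pos_of_pos hspos _)
            exact Real.rpow_le_rpow hspos.le (by linarith) (by norm_num)
          have h2 : s ^ (-(1:ℝ)/2) * s ^ (-(1:ℝ)/2) = s⁻¹ := by
            rw [← Real.rpow_add hspos]
            norm_num
            rw [Real.rpow_neg hspos.le, Real.rpow_one]
          calc s ^ (-(1:ℝ)/2) * (1 + s) ^ (-(1:ℝ)/2)
              ≤ s ^ (-(1:ℝ)/2) * s ^ (-(1:ℝ)/2) :=
                mul_le_mul_of_nonneg_left h1 (Real.rpow_nonneg hspos.le _)
            _ = s⁻¹ := h2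
        have hsinv : s⁻¹ ≤ 4 * (1+t)⁻¹ := by
          rw [show (4:ℝ) * (1+t)⁻¹ = 4/(1+t) by ring, inv_eq_one_div,
            div_le_div_iff₀ hspos h1t]
          nlinarith
        calc g s = Real.exp (-μ * (t-s)) * (s ^ (-(1:ℝ)/2) * (1+s) ^ (-(1:ℝ)/2)) := by
              rw [hg_def]; ring
          _ ≤ Real.exp (-μ * (t-s)) * (4 * (1+t)⁻¹) := by
              apply mul_le_mul_of_nonneg_left (hST.trans hsinv) (Real.exp_pos _).le
          _ = (4 * (1+t)⁻¹) * Real.exp (-μ * (t - s)) := by ring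
      have hIntR : MeasureTheory.IntegrableOn
          (fun s : ℝ => (4 * (1+t)⁻¹) * Real.exp (-μ * (t - s))) (Set.Ioc (t/2) t) := by
        apply Continuous.integrableOn_Ioc
        exact continuous_const.mul
          (Real.continuous_exp.comp (continuous_const.mul (continuous_const.sub continuous_id)))
      have hexpint : (∫ s in Set.Ioc (t/2) t, Real.exp (-μ * (t - s))) ≤ μ⁻¹ := by
        have hrw : ∀ s : ℝ, Real.exp (-μ * (t - s)) = Real.exp (-μ * t) * Real.exp (μ * s) := by
          intro s; rw [← Real.exp_add]; ring_nf
        calc (∫ s in Set.Ioc (t/2) t, Real.exp (-μ * (t - s)))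
            = ∫ s in Set.Ioc (t/2) t, Real.exp (-μ * t) * Real.exp (μ * s) := by
              simp_rw [hrw]
          _ = Real.exp (-μ * t) * ∫ s in Set.Ioc (t/2) t, Real.exp (μ * s) :=
              MeasureTheory.integral_const_mul _ _
          _ = Real.exp (-μ * t) * ((Real.exp (μ * t) - Real.exp (μ * (t/2))) / μ) := by
              rw [← intervalIntegral.integral_of_le (by linarith : t/2 ≤ t),
                stmt17_exp_int μ (t/2) t hμ.ne']
          _ = (1 - Real.exp (-μ * t + μ * (t/2))) / μ := by
              rw [← mul_div_assoc, mul_sub, ← Real.exp_add, ← Real.exp_add]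
              ring_nf
              rw [Real.exp_zero]
              ring
          _ ≤ μ⁻¹ := by
              rw [inv_eq_one_div]
              gcongr
              linarith [Real.exp_pos (-μ * t + μ * (t/2))]
      calc (∫ s in Set.Ioc (t/2) t, g s)
          ≤ ∫ s in Set.Ioc (t/2) t, (4 * (1+t)⁻¹) * Real.exp (-μ * (t - s)) :=
            MeasureTheory.setIntegral_mono_on hIntB hIntR measurableSet_Ioc hb
        _ = (4 * (1+t)⁻¹) * ∫ s in Set.Ioc (t/2) t, Real.exp (-μ * (t - s)) :=
            MeasureTheory.integral_const_mul _ _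
        _ ≤ (4 * (1+t)⁻¹) * μ⁻¹ :=
            mul_le_mul_of_nonneg_left hexpint (by positivity)
        _ = 4/μ * (1+t)⁻¹ := by ring
    rw [hsum]
    have h0 : (0:ℝ) ≤ (1+t)⁻¹ := by positivity
    nlinarith [hI1, hI2]


lemma stmt17_g_integrable (μ t : ℝ) (hμ : 0 < μ) :
    MeasureTheory.IntegrableOn (fun s : ℝ =>
      Real.exp (-μ * (t - s)) * s ^ (-(1 : ℝ) / 2) * (1 + s) ^ (-(1 : ℝ) / 2))
      (Set.Ioc 0 t) := by
  have hcont : ContinuousOn (fun s : ℝ =>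
      Real.exp (-μ * (t - s)) * s ^ (-(1 : ℝ) / 2) * (1 + s) ^ (-(1 : ℝ) / 2))
      (Set.Ioc 0 t) := by
    apply ContinuousOn.mul
    apply ContinuousOn.mul
    · exact (Real.continuous_exp.comp
        (continuous_const.mul (continuous_const.sub continuous_id))).continuousOn
    · exact continuousOn_id.rpow_const fun z hz => Or.inl (ne_of_gt hz.1)
    · exact ((continuous_const.add continuous_id).continuousOn).rpow_const
        fun z hz => Or.inl (by have := hz.1; show (1:ℝ) + z ≠ 0; positivity)
  apply (stmt17_rpow_integrable t).mono'
    (hcont.aestronglyMeasurable measurableSet_Ioc)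
  rw [MeasureTheory.ae_restrict_iff' measurableSet_Ioc]
  refine MeasureTheory.ae_of_all _ fun s hs => ?_
  have hspos : (0:ℝ) < s := hs.1
  have hE : Real.exp (-μ * (t - s)) ≤ 1 := by
    rw [Real.exp_le_one_iff]; nlinarith [hs.2]
  have hT : (1 + s) ^ (-(1:ℝ)/2) ≤ 1 :=
    Real.rpow_le_one_of_one_le_of_nonpos (by linarith) (by norm_num)
  have hT0 : (0:ℝ) ≤ (1 + s) ^ (-(1:ℝ)/2) := Real.rpow_nonneg (by linarith) _
  have hS : (0:ℝ) ≤ s ^ (-(1:ℝ)/2) := Real.rpow_nonneg hspos.le _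
  have hnn : (0:ℝ) ≤ Real.exp (-μ * (t - s)) * s ^ (-(1:ℝ)/2) * (1 + s) ^ (-(1:ℝ)/2) :=
    mul_nonneg (mul_nonneg (Real.exp_pos _).le hS) hT0
  rw [Real.norm_eq_abs, abs_of_nonneg hnn]
  calc Real.exp (-μ * (t - s)) * s ^ (-(1:ℝ)/2) * (1 + s) ^ (-(1:ℝ)/2)
      ≤ 1 * s ^ (-(1:ℝ)/2) * 1 :=
        mul_le_mul (mul_le_mul hE le_rfl hS zero_le_one) hT hT0 (by simpa using hS)
    _ = s ^ (-(1:ℝ)/2) := by ring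

theorem stmt17 (η₀ A a : ℝ) (hη₀ : 0 < η₀) (hA : 0 < A) :
    ∃ C : ℝ, 0 < C ∧ ∀ c x t : ℝ, |c| ≤ A → 0 ≤ t →
      (∫ s in Set.Ioc (0 : ℝ) t,
        Real.exp (-η₀ * (t - s)) * s ^ (-(1 : ℝ) / 2) * (1 + s) ^ (-(1 : ℝ) / 2) *
          (1 + |x - a * t - c * (t - s)|) ^ (-(3 : ℝ) / 4)) ≤
      C * (1 + |x - a * t|) ^ (-(3 : ℝ) / 4) * (1 + t)⁻¹ := by
  set K : ℝ := (1 + A) * (1 + 2/η₀) with hK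
  have hKpos : 0 < K := by positivity
  set C₂ : ℝ := 4 + 128/(η₀/2)^2 + 4/(η₀/2) with hC2
  have hC2pos : 0 < C₂ := by positivity
  refine ⟨K * C₂, by positivity, ?_⟩
  intro c x t hc ht
  have hμ : 0 < η₀/2 := by linarith
  set D : ℝ := (1 + |x - a * t|) ^ (-(3 : ℝ) / 4) with hD
  have hDpos : 0 < D := Real.rpow_pos_of_pos (by positivity) _
  set f : ℝ → ℝ := fun s =>
    Real.exp (-η₀ * (t - s)) * s ^ (-(1 : ℝ) / 2) * (1 + s) ^ (-(1 : ℝ) / 2) *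
      (1 + |x - a * t - c * (t - s)|) ^ (-(3 : ℝ) / 4) with hf
  set g : ℝ → ℝ := fun s =>
    Real.exp (-(η₀/2) * (t - s)) * s ^ (-(1 : ℝ) / 2) * (1 + s) ^ (-(1 : ℝ) / 2) with hg
  have hptw : ∀ s ∈ Set.Ioc (0:ℝ) t, f s ≤ K * D * g s := by
    intro s hs
    have hts : 0 ≤ t - s := by linarith [hs.2]
    have hspos : 0 < s := hs.1
    have hS : (0:ℝ) ≤ s ^ (-(1:ℝ)/2) := Real.rpow_nonneg hspos.le _
    have hT : (0:ℝ) ≤ (1 + s) ^ (-(1:ℝ)/2) := Real.rpow_nonneg (by linarith) _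
    have hzB : |c * (t - s)| ≤ A * (t - s) := by
      rw [abs_mul, abs_of_nonneg hts]
      exact mul_le_mul_of_nonneg_right hc hts
    have hpeel := stmt17_peel (x - a * t) (c * (t - s)) (A * (t - s)) hzB
    have hpeel' : (1 + |x - a * t - c * (t - s)|) ^ (-(3:ℝ)/4) ≤
        (1 + A * (t - s)) ^ ((3:ℝ)/4) * D := hpeel
    have habs := stmt17_absorb η₀ A (t - s) hη₀ hA hts
    calc f s ≤ Real.exp (-η₀ * (t - s)) * s ^ (-(1:ℝ)/2) * (1 + s) ^ (-(1:ℝ)/2) *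
          ((1 + A * (t - s)) ^ ((3:ℝ)/4) * D) := by
          apply mul_le_mul_of_nonneg_left hpeel'
          positivity
      _ = (Real.exp (-η₀ * (t - s)) * (1 + A * (t - s)) ^ ((3:ℝ)/4)) *
          (s ^ (-(1:ℝ)/2) * (1 + s) ^ (-(1:ℝ)/2) * D) := by ring
      _ ≤ ((1 + A) * (1 + 2/η₀) * Real.exp (-(η₀/2) * (t - s))) *
          (s ^ (-(1:ℝ)/2) * (1 + s) ^ (-(1:ℝ)/2) * D) := by
          apply mul_le_mul_of_nonneg_right habs
          positivity
      _ = K * D * g s := by rw [hK, hg]; ring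
  have hIntg : MeasureTheory.IntegrableOn g (Set.Ioc 0 t) := stmt17_g_integrable (η₀/2) t hμ
  have hIntKDg : MeasureTheory.IntegrableOn (fun s => K * D * g s) (Set.Ioc 0 t) :=
    hIntg.const_mul _
  have hf_meas : MeasureTheory.AEStronglyMeasurable f
      (MeasureTheory.volume.restrict (Set.Ioc (0:ℝ) t)) := by
    apply ContinuousOn.aestronglyMeasurable _ measurableSet_Ioc
    apply ContinuousOn.mul
    apply ContinuousOn.mul
    apply ContinuousOn.mul
    · exact (Real.continuous_exp.comp
        (continuous_const.mul (continuous_const.sub continuous_id))).continuousOn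
    · exact continuousOn_id.rpow_const fun z hz => Or.inl (ne_of_gt hz.1)
    · exact ((continuous_const.add continuous_id).continuousOn).rpow_const
        fun z hz => Or.inl (by have := hz.1; show (1:ℝ) + z ≠ 0; positivity)
    · apply ContinuousOn.rpow_const _ (fun z hz => Or.inl (by positivity))
      apply Continuous.continuousOn
      have : Continuous fun z : ℝ => x - a * t - c * (t - z) := by continuity
      exact continuous_const.add (continuous_abs.comp this)
  have hf_nonneg : ∀ s ∈ Set.Ioc (0:ℝ) t, 0 ≤ f s := by
    intro s hs
    have h1 : (0:ℝ) ≤ s := hs.1.le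
    have h2 : (0:ℝ) ≤ 1 + s := by linarith
    have h3 : (0:ℝ) < 1 + |x - a * t - c * (t - s)| := by positivity
    rw [hf]
    positivity
  have hIntf : MeasureTheory.IntegrableOn f (Set.Ioc 0 t) := by
    apply hIntKDg.mono' hf_meas
    rw [MeasureTheory.ae_restrict_iff' measurableSet_Ioc]
    exact MeasureTheory.ae_of_all _ fun s hs => by
      rw [Real.norm_eq_abs, abs_of_nonneg (hf_nonneg s hs)]; exact hptw s hs
  calc (∫ s in Set.Ioc (0:ℝ) t, f s)
      ≤ ∫ s in Set.Ioc (0:ℝ) t, K * D * g s :=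
        MeasureTheory.setIntegral_mono_on hIntf hIntKDg measurableSet_Ioc hptw
    _ = K * D * ∫ s in Set.Ioc (0:ℝ) t, g s := MeasureTheory.integral_const_mul _ _
    _ ≤ K * D * (C₂ * (1 + t)⁻¹) := by
        apply mul_le_mul_of_nonneg_left _ (by positivity)
        exact stmt17_core (η₀/2) t hμ ht
    _ = K * C₂ * D * (1 + t)⁻¹ := by ring
end
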